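/- arXiv:2304.04114 — 8 statements merged into one kernel-verified Lean document; each statement's English description precedes it below -/
import Mathlib

section
/- In a right ℓ-group G with arrow operation x → y := (y x⁻¹) ∧ e on G⁻, the following hold for all x, y, z ∈ G⁻: (x → y)x = x ∧ y; (x ∧ y) → z = (x → y) → (x → z); x → (y ∧ z) = (x → y) ∧ (x → z); xy → z = x → (y → z); x → yz = ((z → x) → y)(x → z); and x → y = e if and only if x ≤ y. -/
/-!
Right multiplication is a lattice automorphism, so `x → y = (x ⊓ y) * x⁻¹`. In this form the
arrow is invariant under right translation of both arguments, and the arrows compose: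
`((x ⊓ y) → z) * (x → y) = x → (y ⊓ z)`. Each identity is then a short computation;
the two product identities rest on `x * y ≤ y` for `x ≤ 1`.
-/

/-- The arrow operation `x → y := (y * x⁻¹) ⊓ 1` on the negative cone of a right ℓ-group. -/
def arr {G : Type*} [Lattice G] [Group G] (x y : G) : G := (y * x⁻¹) ⊓ 1

section Arrow

variable {G : Type*} [Lattice G] [Group G] [MulRightMono G]

theorem arr_eq_inf_mul_inv (x y : G) : arr x y = (x ⊓ y) * x⁻¹ := by
  rw [arr, inf_mul, mul_inv_cancel, inf_comm]

theorem arr_mul_self (x y : G) : arr x y * x = x ⊓ y := by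
  rw [arr_eq_inf_mul_inv, inv_mul_cancel_right]

theorem arr_eq_one_iff (x y : G) : arr x y = 1 ↔ x ≤ y := by
  rw [arr_eq_inf_mul_inv, mul_inv_eq_one, inf_eq_left]

theorem arr_mul_right_mul_right (x y c : G) : arr (x * c) (y * c) = arr x y := by
  rw [arr_eq_inf_mul_inv, arr_eq_inf_mul_inv, ← inf_mul, mul_inv_rev, mul_assoc,
    mul_inv_cancel_left]

theorem arr_inf_right_of_le {x y : G} (hxy : x ≤ y) (z : G) : arr x (y ⊓ z) = arr x z := by
  rw [arr_eq_inf_mul_inv, arr_eq_inf_mul_inv, ← inf_assoc, inf_eq_left.mpr hxy]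

theorem arr_inf_right (x y z : G) : arr x (y ⊓ z) = arr x y ⊓ arr x z := by
  simp only [arr_eq_inf_mul_inv]
  rw [← inf_mul, inf_inf_distrib_left]

theorem arr_inf_left_mul (x y z : G) : arr (x ⊓ y) z * arr x y = arr x (y ⊓ z) := by
  simp only [arr_eq_inf_mul_inv]
  rw [mul_assoc, inv_mul_cancel_left, inf_assoc]

theorem arr_arr (x y z : G) : arr (arr x y) (arr x z) = arr (x ⊓ y) z := by
  rw [arr_eq_inf_mul_inv x y, arr_eq_inf_mul_inv x z, arr_mul_right_mul_right,
    arr_inf_right_of_le inf_le_left]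

theorem arr_mul_left {x : G} (hx : x ≤ 1) (y z : G) : arr (x * y) z = arr x (arr y z) := by
  rw [arr_eq_inf_mul_inv y z, ← mul_inv_cancel_right x y, arr_mul_right_mul_right,
    inv_mul_cancel_right, arr_inf_right_of_le (mul_le_of_le_one_left' hx)]

theorem arr_mul_right {y : G} (hy : y ≤ 1) (x z : G) :
    arr x (y * z) = arr (arr z x) y * arr x z := by
  rw [arr_eq_inf_mul_inv z x, ← mul_inv_cancel_right y z, arr_mul_right_mul_right,
    inv_mul_cancel_right, inf_comm z x, arr_inf_left_mul,
    inf_eq_right.mpr (mul_le_of_le_one_left' hy)]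

end Arrow

theorem equations_for_arrow_general {G : Type*} [Lattice G] [Group G]
    [CovariantClass G G (Function.swap (· * ·)) (· ≤ ·)]
    (x y z : G) (hx : x ≤ 1) (hy : y ≤ 1) :
    arr x y * x = x ⊓ y ∧
    arr (x ⊓ y) z = arr (arr x y) (arr x z) ∧
    arr x (y ⊓ z) = arr x y ⊓ arr x z ∧
    arr (x * y) z = arr x (arr y z) ∧
    arr x (y * z) = arr (arr z x) y * arr x z ∧
    (arr x y = 1 ↔ x ≤ y) :=
  ⟨arr_mul_self x y, (arr_arr x y z).symm, arr_inf_right x y z, arr_mul_left hx y z,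
    arr_mul_right hy x z, arr_eq_one_iff x y⟩

/-- Identities for the arrow operation on the negative cone of a right ℓ-group. -/
theorem equations_for_arrow {G : Type*} [Lattice G] [Group G]
    [CovariantClass G G (Function.swap (· * ·)) (· ≤ ·)]
    (x y z : G) (hx : x ≤ 1) (hy : y ≤ 1) (hz : z ≤ 1) :
    arr x y * x = x ⊓ y ∧
    arr (x ⊓ y) z = arr (arr x y) (arr x z) ∧
    arr x (y ⊓ z) = arr x y ⊓ arr x z ∧
    arr (x * y) z = arr x (arr y z) ∧
    arr x (y * z) = arr (arr z x) y * arr x z ∧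
    (arr x y = 1 ↔ x ≤ y) :=
  equations_for_arrow_general x y z hx hy
end

section
/- Let G be a right ℓ-group and s ∈ G⁺ a strong order unit. Then each element g ∈ G⁻ has a unique right-normal factorization g = g_k g_{k-1} ⋯ g₁ where k = min{i ≥ 0 : g ≥ s^{-i}}, given by g_i = (g ∨ s^{-i})(g ∨ s^{-(i-1)})^{-1}; each g_i lies in [s^{-1}, e] \ {e}, and the factorization is right-maximal, i.e., s^{-1} g_i^{-1} ∨ g_{i+1} = e for 1 ≤ i < k. -/
/-!
Let `p i` be the suffix product `g_i ⋯ g₁` of a factorization of `g` with factors in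
`[s⁻¹, 1]`. A pair of consecutive factors admits no splitting exactly when
`s⁻¹ g_i⁻¹ ⊔ g_{i+1} = 1`, and multiplying this on the right by `p i` turns it into
`s⁻¹ p (i-1) ⊔ p (i+1) = p i`. Because left multiplication by `s⁻¹` is a lattice automorphism,
this recursion telescopes to `p i = s⁻¹ p (i-1) ⊔ g`, hence `p i = g ⊔ s^{-i}`. So the suffix
products of every right-normal factorization are forced, and so are its length (the factors are
`≠ 1`) and its factors `p i p (i-1)⁻¹`; conversely `g ⊔ s^{-i}` satisfies the recursion, which gives
existence and right-maximality.
-/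

/-- An element `s` of a right ℓ-group is normal if left multiplication by `s` preserves
the lattice operations. -/
def IsNormal {G : Type*} [Lattice G] [Group G] (s : G) : Prop :=
  ∀ x y : G, s * (x ⊓ y) = s * x ⊓ s * y ∧ s * (x ⊔ y) = s * x ⊔ s * y

/-- A strong order unit: a normal element `s > 1` such that every `g` satisfies
`g ≤ sⁿ` for some integer `n`. -/
def IsStrongOrderUnit {G : Type*} [Lattice G] [Group G] (s : G) : Prop :=
  1 < s ∧ IsNormal s ∧ ∀ g : G, ∃ n : ℤ, g ≤ s ^ n

/-- `l = [g_k, …, g_1]` is a right-normal factorization of `g`: `g = g_k ⋯ g₁`, each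
factor lies in `[s⁻¹, 1] \ {1}`, and no factor `g_{i+1}` splits off a nontrivial right
divisor `h` with `h * g_i ∈ [s⁻¹, 1]`. -/
def IsRightNormalFactorization {G : Type*} [Lattice G] [Group G] (s g : G)
    (l : List G) : Prop :=
  g = l.prod ∧
  (∀ a ∈ l, s⁻¹ ≤ a ∧ a ≤ 1 ∧ a ≠ 1) ∧
  ∀ j : ℕ, ∀ hj : j + 1 < l.length,
    ¬ ∃ h h' : G, h ≤ 1 ∧ h' ≤ 1 ∧ h ≠ 1 ∧
      h' * h = l.get ⟨j, Nat.lt_of_succ_lt hj⟩ ∧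
      s⁻¹ ≤ h * l.get ⟨j + 1, hj⟩ ∧ h * l.get ⟨j + 1, hj⟩ ≤ 1

namespace IsNormal

variable {G : Type*} [Lattice G] [Group G] {s : G}

theorem mul_sup (hs : IsNormal s) (x y : G) : s * (x ⊔ y) = s * x ⊔ s * y :=
  (hs x y).2

theorem mul_le_mul_left (hs : IsNormal s) {x y : G} (h : x ≤ y) : s * x ≤ s * y :=
  calc s * x ≤ s * x ⊔ s * y := le_sup_left
    _ = s * y := by rw [← hs.mul_sup, sup_eq_right.2 h]

theorem inv (hs : IsNormal s) : IsNormal s⁻¹ := by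
  intro x y
  obtain ⟨hinf, hsup⟩ := hs (s⁻¹ * x) (s⁻¹ * y)
  simp only [mul_inv_cancel_left] at hinf hsup
  exact ⟨by rw [← hinf, inv_mul_cancel_left], by rw [← hsup, inv_mul_cancel_left]⟩

end IsNormal

section Quotients

variable {G : Type*} [Group G]

theorem zpow_neg_natCast_eq_inv_pow (s : G) (n : ℕ) : s ^ (-(n : ℤ)) = s⁻¹ ^ n := by
  rw [zpow_neg, zpow_natCast, inv_pow]

def factorsOf (p : ℕ → G) (n : ℕ) : List G :=
  (List.range n).map fun j => p (n - j) * (p (n - j - 1))⁻¹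

variable {p : ℕ → G} {n : ℕ}

@[simp]
theorem length_factorsOf : (factorsOf p n).length = n := by simp [factorsOf]

theorem getElem_factorsOf {j : ℕ} (hj : j < (factorsOf p n).length) :
    (factorsOf p n)[j] = p (n - j) * (p (n - j - 1))⁻¹ := by simp [factorsOf]

theorem factorsOf_succ : factorsOf p (n + 1) = p (n + 1) * (p n)⁻¹ :: factorsOf p n := by
  simp [factorsOf, List.range_succ_eq_map, Function.comp_def]

theorem prod_factorsOf : (factorsOf p n).prod = p n * (p 0)⁻¹ := by
  induction n with
  | zero => simp [factorsOf]
  | succ n ih => rw [factorsOf_succ, List.prod_cons, ih, mul_assoc, inv_mul_cancel_left]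

theorem forall_mem_factorsOf {P : G → Prop} :
    (∀ a ∈ factorsOf p n, P a) ↔ ∀ i < n, P (p (i + 1) * (p i)⁻¹) := by
  induction n with
  | zero => simp [factorsOf]
  | succ n ih =>
    simp only [factorsOf_succ, List.forall_mem_cons, ih, Nat.forall_lt_succ_right]
    exact and_comm

theorem forall_getElem_factorsOf {P : G → G → Prop} :
    (∀ j (hj : j + 1 < (factorsOf p n).length), P (factorsOf p n)[j] (factorsOf p n)[j + 1]) ↔
      ∀ i, i + 2 ≤ n → P (p (i + 2) * (p (i + 1))⁻¹) (p (i + 1) * (p i)⁻¹) := by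
  simp only [getElem_factorsOf]
  constructor
  · intro h i hi
    convert h (n - i - 2) (by simp; omega) using 4 <;> omega
  · intro h j hj
    simp only [length_factorsOf] at hj
    convert h (n - j - 2) (by omega) using 4 <;> omega

theorem factorsOf_congr {p' : ℕ → G} (h : ∀ i ≤ n, p i = p' i) :
    factorsOf p n = factorsOf p' n :=
  List.map_congr_left fun j hj => by
    have := List.mem_range.1 hj
    rw [h (n - j) (by omega), h (n - j - 1) (by omega)]

def suffixProd (l : List G) (i : ℕ) : G :=
  (l.drop (l.length - i)).prod

theorem suffixProd_zero (l : List G) : suffixProd l 0 = 1 := by simp [suffixProd]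

theorem factorsOf_suffixProd (l : List G) : factorsOf (suffixProd l) l.length = l := by
  refine List.ext_getElem length_factorsOf fun j h₁ h₂ => ?_
  rw [getElem_factorsOf, suffixProd, suffixProd, show l.length - (l.length - j) = j by omega,
    show l.length - (l.length - j - 1) = j + 1 by omega, List.drop_eq_getElem_cons h₂,
    List.prod_cons, mul_inv_cancel_right]

end Quotients

section Chain

variable {G : Type*} [Lattice G] [Group G]

structure IsRightNormalChain (s : G) (p : ℕ → G) (n : ℕ) : Prop where
  step : ∀ i < n, s⁻¹ * p i ≤ p (i + 1) ∧ p (i + 1) < p i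
  sup_eq : ∀ i, i + 2 ≤ n → s⁻¹ * p i ⊔ p (i + 2) = p (i + 1)

namespace IsRightNormalChain

variable {s : G} {p : ℕ → G} {n : ℕ}

theorem antitone (hc : IsRightNormalChain s p n) {i j : ℕ} (hij : i ≤ j) (hj : j ≤ n) :
    p j ≤ p i := by
  induction j, hij using Nat.le_induction with
  | base => exact le_rfl
  | succ j hij ih => exact (hc.step j (by omega)).2.le.trans (ih (by omega))

theorem succ_eq_inv_mul_sup (hs : IsNormal s) (hc : IsRightNormalChain s p n) {i : ℕ}
    (hi : i < n) : p (i + 1) = s⁻¹ * p i ⊔ p n := by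
  suffices h : ∀ m, i + 1 + m ≤ n → p (i + 1) = s⁻¹ * p i ⊔ p (i + 1 + m) by
    simpa [show i + 1 + (n - i - 1) = n by omega] using h (n - i - 1) (by omega)
  intro m
  induction m with
  | zero => exact fun _ => (sup_eq_right.2 (hc.step i hi).1).symm
  | succ m ih =>
    intro hm
    have hle : s⁻¹ * p (i + m) ≤ s⁻¹ * p i :=
      hs.inv.mul_le_mul_left (hc.antitone (by omega) (by omega))
    rw [ih (by omega), show i + 1 + m = i + m + 1 by omega, ← hc.sup_eq (i + m) (by omega),
      ← sup_assoc, sup_eq_left.2 hle, show i + m + 2 = i + 1 + (m + 1) by omega]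

end IsRightNormalChain

variable [MulRightMono G]

theorem exists_split_iff_sup_ne_one {s x y : G} (hx : x ≤ 1) (hy : s⁻¹ ≤ y) (hy₁ : y ≤ 1) :
    (∃ h h' : G, h ≤ 1 ∧ h' ≤ 1 ∧ h ≠ 1 ∧ h' * h = x ∧ s⁻¹ ≤ h * y ∧ h * y ≤ 1) ↔
      s⁻¹ * y⁻¹ ⊔ x ≠ 1 := by
  constructor
  · rintro ⟨h, h', hh, hh', hne, rfl, hlow, -⟩ heq
    have : 1 ≤ h := heq ▸ sup_le (mul_inv_le_iff_le_mul.2 hlow) (mul_le_of_le_one_left' hh')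
    exact hne (le_antisymm hh this)
  · intro hne
    set u := s⁻¹ * y⁻¹ ⊔ x
    have huy : u * y = s⁻¹ ⊔ x * y := by rw [sup_mul, inv_mul_cancel_right]
    refine ⟨u, x * u⁻¹, sup_le (mul_inv_le_one_iff_le.2 hy) hx,
      mul_inv_le_one_iff_le.2 le_sup_right, hne, inv_mul_cancel_right x u, ?_, ?_⟩
    · rw [huy]; exact le_sup_left
    · rw [huy]; exact sup_le (hy.trans hy₁) ((mul_le_of_le_one_left' hx).trans hy₁)

theorem isRightNormalFactorization_iff {s g : G} {l : List G} :
    IsRightNormalFactorization s g l ↔ g = l.prod ∧ (∀ a ∈ l, s⁻¹ ≤ a ∧ a ≤ 1 ∧ a ≠ 1) ∧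
      ∀ j (hj : j + 1 < l.length), s⁻¹ * l[j + 1]⁻¹ ⊔ l[j] = 1 := by
  refine and_congr_right fun _ => and_congr_right fun hl =>
    forall_congr' fun j => forall_congr' fun hj => ?_
  have hx := hl _ (l.getElem_mem (Nat.lt_of_succ_lt hj))
  have hy := hl _ (l.getElem_mem hj)
  simp only [List.get_eq_getElem]
  rw [exists_split_iff_sup_ne_one hx.2.1 hy.1 hy.2.1, not_not]

theorem inv_le_mul_inv_and_mul_inv_le_one_and_ne_one_iff {s a b : G} :
    (s⁻¹ ≤ b * a⁻¹ ∧ b * a⁻¹ ≤ 1 ∧ b * a⁻¹ ≠ 1) ↔ s⁻¹ * a ≤ b ∧ b < a := by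
  rw [le_mul_inv_iff_mul_le, mul_inv_le_one_iff_le, Ne, mul_inv_eq_one, lt_iff_le_and_ne]

theorem mul_inv_inv_sup_mul_inv_eq_one_iff (t a b c : G) :
    t * (b * a⁻¹)⁻¹ ⊔ c * b⁻¹ = 1 ↔ t * a ⊔ c = b := by
  rw [mul_inv_rev, inv_inv, ← mul_assoc, ← sup_mul, mul_inv_eq_one]

theorem isRightNormalFactorization_factorsOf_iff {s g : G} {p : ℕ → G} {n : ℕ}
    (hp0 : p 0 = 1) :
    IsRightNormalFactorization s g (factorsOf p n) ↔ g = p n ∧ IsRightNormalChain s p n := by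
  rw [isRightNormalFactorization_iff, prod_factorsOf, hp0, inv_one, mul_one,
    forall_mem_factorsOf (P := fun a => s⁻¹ ≤ a ∧ a ≤ 1 ∧ a ≠ 1),
    forall_getElem_factorsOf (P := fun x y => s⁻¹ * y⁻¹ ⊔ x = 1)]
  simp only [inv_le_mul_inv_and_mul_inv_le_one_and_ne_one_iff,
    mul_inv_inv_sup_mul_inv_eq_one_iff]
  exact and_congr_right fun _ => ⟨fun ⟨h₁, h₂⟩ => ⟨h₁, h₂⟩, fun ⟨h₁, h₂⟩ => ⟨h₁, h₂⟩⟩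

namespace IsRightNormalChain

variable {s : G} {p : ℕ → G} {n : ℕ}

theorem eq_sup_inv_pow (hs : IsNormal s) (hs₁ : 1 ≤ s) (hc : IsRightNormalChain s p n)
    (hp0 : p 0 = 1) : ∀ i ≤ n, p i = p n ⊔ s⁻¹ ^ i
  | 0, _ => by rw [hp0, pow_zero, sup_eq_right.2 (hp0 ▸ hc.antitone (Nat.zero_le n) le_rfl)]
  | i + 1, hi => by
    have hsn : s⁻¹ * p n ≤ p n := mul_le_of_le_one_left' (Right.inv_le_one_iff.2 hs₁)
    rw [hc.succ_eq_inv_mul_sup hs hi, hc.eq_sup_inv_pow hs hs₁ hp0 i (by omega), hs.inv.mul_sup,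
      ← pow_succ', sup_right_comm, sup_eq_right.2 hsn]

theorem inv_pow_le (hs : IsNormal s) (hs₁ : 1 ≤ s) (hc : IsRightNormalChain s p n)
    (hp0 : p 0 = 1) : s⁻¹ ^ n ≤ p n :=
  sup_eq_left.1 (hc.eq_sup_inv_pow hs hs₁ hp0 n le_rfl).symm

theorem length_le_of_eq (hs : IsNormal s) (hs₁ : 1 ≤ s) {p' : ℕ → G} {n' : ℕ}
    (hc : IsRightNormalChain s p n) (hc' : IsRightNormalChain s p' n') (hp0 : p 0 = 1)
    (hp0' : p' 0 = 1) (h : p n = p' n') : n' ≤ n := by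
  by_contra! hlt
  have hsn := hc.inv_pow_le hs hs₁ hp0
  have hsn₁ : s⁻¹ ^ (n + 1) ≤ p n :=
    (pow_succ' s⁻¹ n ▸ mul_le_of_le_one_left' (Right.inv_le_one_iff.2 hs₁)).trans hsn
  have h₁ : p' n = p n := by rw [hc'.eq_sup_inv_pow hs hs₁ hp0' n hlt.le, ← h, sup_eq_left.2 hsn]
  have h₂ : p' (n + 1) = p n := by
    rw [hc'.eq_sup_inv_pow hs hs₁ hp0' (n + 1) hlt, ← h, sup_eq_left.2 hsn₁]
  exact (hc'.step n hlt).2.ne (h₂.trans h₁.symm)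

theorem unique (hs : IsNormal s) (hs₁ : 1 ≤ s) {p' : ℕ → G} {n' : ℕ}
    (hc : IsRightNormalChain s p n) (hc' : IsRightNormalChain s p' n') (hp0 : p 0 = 1)
    (hp0' : p' 0 = 1) (h : p n = p' n') : n = n' ∧ ∀ i ≤ n, p i = p' i := by
  obtain rfl : n = n' := le_antisymm (hc'.length_le_of_eq hs hs₁ hc hp0' hp0 h.symm)
    (hc.length_le_of_eq hs hs₁ hc' hp0 hp0' h)
  exact ⟨rfl, fun i hi => by
    rw [hc.eq_sup_inv_pow hs hs₁ hp0 i hi, hc'.eq_sup_inv_pow hs hs₁ hp0' i hi, h]⟩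

end IsRightNormalChain

variable {s : G}

theorem sup_inv_pow_succ (hs : IsNormal s) (hs₁ : 1 ≤ s) (g : G) (i : ℕ) :
    g ⊔ s⁻¹ ^ (i + 1) = g ⊔ s⁻¹ * (g ⊔ s⁻¹ ^ i) := by
  rw [hs.inv.mul_sup, ← pow_succ', ← sup_assoc,
    sup_eq_left.2 (mul_le_of_le_one_left' (Right.inv_le_one_iff.2 hs₁))]

theorem sup_inv_pow_eq_of_succ_eq (hs : IsNormal s) (hs₁ : 1 ≤ s) {g : G} {i : ℕ}
    (h : g ⊔ s⁻¹ ^ (i + 1) = g ⊔ s⁻¹ ^ i) {j : ℕ} (hij : i ≤ j) :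
    g ⊔ s⁻¹ ^ j = g ⊔ s⁻¹ ^ i := by
  induction j, hij using Nat.le_induction with
  | base => rfl
  | succ j _ ih => rw [sup_inv_pow_succ hs hs₁, ih, ← sup_inv_pow_succ hs hs₁, h]

theorem isRightNormalChain_sup_inv_pow (hs : IsNormal s) (hs₁ : 1 ≤ s) {g : G} {k : ℕ}
    (hk : s⁻¹ ^ k ≤ g) (hkmin : ∀ j < k, ¬ s⁻¹ ^ j ≤ g) :
    IsRightNormalChain s (fun i => g ⊔ s⁻¹ ^ i) k := by
  have hle (i : ℕ) : g ⊔ s⁻¹ ^ (i + 1) ≤ g ⊔ s⁻¹ ^ i := by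
    rw [sup_inv_pow_succ hs hs₁]
    exact sup_le le_sup_left (mul_le_of_le_one_left' (Right.inv_le_one_iff.2 hs₁))
  refine ⟨fun i hi => ⟨sup_inv_pow_succ hs hs₁ g i ▸ le_sup_right, (hle i).lt_of_ne fun h => ?_⟩,
    fun i _ => ?_⟩
  · have : g ⊔ s⁻¹ ^ (k - 1) = g := by
      rw [sup_inv_pow_eq_of_succ_eq hs hs₁ h (by omega : i ≤ k - 1),
        ← sup_inv_pow_eq_of_succ_eq hs hs₁ h hi.le, sup_eq_left.2 hk]
    exact hkmin (k - 1) (by omega) (sup_eq_left.1 this)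
  · rw [sup_inv_pow_succ hs hs₁ g (i + 1), sup_left_comm, ← hs.inv.mul_sup, sup_eq_left.2 (hle i),
      ← sup_inv_pow_succ hs hs₁]

end Chain

theorem factorsOf_sup_inv_pow {G : Type*} [Lattice G] [Group G] (s g : G) (k : ℕ) :
    factorsOf (fun i => g ⊔ s⁻¹ ^ i) k = (List.range k).map fun j =>
      (g ⊔ s ^ (-((k - j : ℕ) : ℤ))) * (g ⊔ s ^ (-((k - j : ℕ) : ℤ) + 1))⁻¹ :=
  List.map_congr_left fun j hj => by
    have := List.mem_range.1 hj
    rw [show -((k - j : ℕ) : ℤ) + 1 = -((k - j - 1 : ℕ) : ℤ) by omega,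
      zpow_neg_natCast_eq_inv_pow, zpow_neg_natCast_eq_inv_pow]

/-- In a right ℓ-group with strong order unit `s`, each `g ≤ 1` has a unique right-normal
factorization `g = g_k ⋯ g₁` with `k = min {i : s^{-i} ≤ g}` and
`g_i = (g ⊔ s^{-i}) (g ⊔ s^{-(i-1)})⁻¹`; it is right-maximal: `s⁻¹ g_i⁻¹ ⊔ g_{i+1} = 1`. -/
theorem right_normal_facs_exist_and_unique {G : Type*} [Lattice G] [Group G]
    [CovariantClass G G (Function.swap (· * ·)) (· ≤ ·)]
    (s : G) (hs : IsStrongOrderUnit s) (g : G) (hg : g ≤ 1)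
    (k : ℕ) (hk : s ^ (-(k : ℤ)) ≤ g) (hkmin : ∀ j : ℕ, j < k → ¬ s ^ (-(j : ℤ)) ≤ g) :
    IsRightNormalFactorization s g
      ((List.range k).map (fun j =>
        (g ⊔ s ^ (-((k - j : ℕ) : ℤ))) * (g ⊔ s ^ (-((k - j : ℕ) : ℤ) + 1))⁻¹)) ∧
    (∀ l : List G, IsRightNormalFactorization s g l →
      l = (List.range k).map (fun j =>
        (g ⊔ s ^ (-((k - j : ℕ) : ℤ))) * (g ⊔ s ^ (-((k - j : ℕ) : ℤ) + 1))⁻¹)) ∧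
    (∀ i : ℕ, 1 ≤ i → i < k →
      s⁻¹ * ((g ⊔ s ^ (-(i : ℤ))) * (g ⊔ s ^ (-(i : ℤ) + 1))⁻¹)⁻¹ ⊔
        (g ⊔ s ^ (-(i : ℤ) - 1)) * (g ⊔ s ^ (-(i : ℤ)))⁻¹ = 1) := by
  obtain ⟨hs₁, hsn, -⟩ := hs
  rw [zpow_neg_natCast_eq_inv_pow] at hk
  replace hkmin j hj : ¬ s⁻¹ ^ j ≤ g := zpow_neg_natCast_eq_inv_pow s j ▸ hkmin j hj
  set q : ℕ → G := fun i => g ⊔ s⁻¹ ^ i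
  have hq0 : q 0 = 1 := by
    show g ⊔ s⁻¹ ^ 0 = 1
    rw [pow_zero, sup_eq_right.2 hg]
  have hqk : q k = g := sup_eq_left.2 hk
  have hqc : IsRightNormalChain s q k := isRightNormalChain_sup_inv_pow hsn hs₁.le hk hkmin
  rw [← factorsOf_sup_inv_pow]
  refine ⟨(isRightNormalFactorization_factorsOf_iff hq0).2 ⟨hqk.symm, hqc⟩, fun l hl => ?_,
    fun i hi hik => ?_⟩
  · rw [← factorsOf_suffixProd l, isRightNormalFactorization_factorsOf_iff (suffixProd_zero l)]
      at hl
    obtain ⟨rfl, heq⟩ :=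
      hl.2.unique hsn hs₁.le hqc (suffixProd_zero l) hq0 (hl.1.symm.trans hqk.symm)
    exact (factorsOf_suffixProd l).symm.trans (factorsOf_congr heq)
  · obtain ⟨m, rfl⟩ : ∃ m, i = m + 1 := ⟨i - 1, by omega⟩
    rw [show -((m + 1 : ℕ) : ℤ) + 1 = -(m : ℤ) by push_cast; ring,
      show -((m + 1 : ℕ) : ℤ) - 1 = -((m + 2 : ℕ) : ℤ) by push_cast; ring,
      zpow_neg_natCast_eq_inv_pow, zpow_neg_natCast_eq_inv_pow, zpow_neg_natCast_eq_inv_pow,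
      mul_inv_inv_sup_mul_inv_eq_one_iff]
    exact hqc.sup_eq m (by omega)
end

section
/- Let G be a right ℓ-group with strong order unit s. Then for every k ≥ 0, the strong order intervals with respect to the order ≤ and its dual left-invariant order ≼ (defined by g ≼ h iff h⁻¹ ≤ g⁻¹) coincide: [s^{-k}, e]_≤ = [s^{-k}, e]_≼. -/
/-!
In a right ℓ-group, `(s ^ k)⁻¹ ≤ g` and `g⁻¹ ≤ s ^ k` say that `g * s ^ k` resp. `s ^ k * g` is
positive. These two elements are conjugate by `s ^ k`, and conjugation by a normal element
preserves the positive cone, since `t * (x ⊔ 1) = t * x ⊔ t` turns `1 ≤ x` into `t ≤ t * x`.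
The upper bounds `g ≤ 1` and `g⁻¹ ≥ 1` agree by right invariance alone.
-/

namespace IsNormal

variable {G : Type*} [Lattice G] [Group G]

lemma one : IsNormal (1 : G) := fun x y => by simp only [one_mul, and_self]

lemma mul {s t : G} (hs : IsNormal s) (ht : IsNormal t) : IsNormal (s * t) := fun x y => by
  simp only [mul_assoc, (ht x y).1, (ht x y).2, (hs (t * x) (t * y)).1, (hs (t * x) (t * y)).2,
    and_self]

lemma pow {s : G} (hs : IsNormal s) : ∀ n : ℕ, IsNormal (s ^ n)
  | 0 => by simpa only [pow_zero] using one
  | n + 1 => by simpa only [pow_succ] using (hs.pow n).mul hs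

variable [CovariantClass G G (Function.swap (· * ·)) (· ≤ ·)] {t : G}

lemma one_le_conj_iff (ht : IsNormal t) (x : G) : 1 ≤ t * x * t⁻¹ ↔ 1 ≤ x := by
  calc 1 ≤ t * x * t⁻¹
      ↔ t ≤ t * x := by rw [← mul_le_mul_iff_right t, one_mul, inv_mul_cancel_right]
    _ ↔ t * (x ⊔ 1) = t * x := by rw [(ht x 1).2, mul_one, sup_eq_left]
    _ ↔ 1 ≤ x := by rw [mul_right_inj, sup_eq_left]

lemma inv_le_iff_inv_le (ht : IsNormal t) (g : G) : t⁻¹ ≤ g ↔ g⁻¹ ≤ t := by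
  rw [inv_le_iff_one_le_mul, inv_le_iff_one_le_mul, ← ht.one_le_conj_iff (g * t)]
  group

end IsNormal

/-- For a strong order unit `s`, the strong order intervals for the order `≤` and for the
dual left-invariant order `≼` (with `g ≼ h ↔ h⁻¹ ≤ g⁻¹`) coincide:
`[s^{-k}, 1]_≤ = [s^{-k}, 1]_≼`. -/
theorem strong_order_intervals_coincide {G : Type*} [Lattice G] [Group G]
    [CovariantClass G G (Function.swap (· * ·)) (· ≤ ·)]
    (s : G) (hs : IsStrongOrderUnit s) (k : ℕ) (g : G) :
    (s ^ (-(k : ℤ)) ≤ g ∧ g ≤ 1) ↔ (g⁻¹ ≤ (s ^ (-(k : ℤ)))⁻¹ ∧ (1 : G)⁻¹ ≤ g⁻¹) := by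
  rw [zpow_neg, zpow_natCast, inv_inv, inv_one, Right.one_le_inv_iff,
    (hs.2.1.pow k).inv_le_iff_inv_le]
end

section
/- Let G be a modular noetherian right ℓ-group. Then any two atomic factorizations of g ∈ G⁻ (factorizations of g as a product of dual atoms x ≺ e) have the same number of factors, and the resulting degree function deg' : G⁻ → ℤ≥0 extends uniquely to a group homomorphism deg : G → ℤ. -/
/-- A right ℓ-group is noetherian if every ascending chain bounded above and every
descending chain bounded below stabilizes. -/
def IsLatticeNoetherian (G : Type*) [Lattice G] : Prop :=
  (∀ f : ℕ → G, Monotone f → (∃ h : G, ∀ n, f n ≤ h) → ∃ N, ∀ m, N ≤ m → f m = f N) ∧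
  (∀ f : ℕ → G, Antitone f → (∃ h : G, ∀ n, h ≤ f n) → ∃ N, ∀ m, N ≤ m → f m = f N)

/-! Since right multiplication is an order automorphism, `g = x_k ⋯ x_1` is a factorization
into dual atoms exactly when `g ⋖ x_{k-1} ⋯ x_1 ⋖ ⋯ ⋖ x_1 ⋖ 1` is a maximal chain in `[g, 1]`.
The chain conditions produce such chains, and modularity makes all of them equally long by
the Jordan–Dedekind argument: if the first steps `g ⋖ A` and `g ⋖ B` differ, then `A ⊓ B = g`
and `A, B ⋖ A ⊔ B`, so induction applies to chains through `A ⊔ B`.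

The common length `intervalLength x y` of the maximal chains of an interval `[x, y]` is
additive and right invariant, hence `degree g = intervalLength m 1 - intervalLength m g` does
not depend on the common lower bound `m` of `g` and `1`; comparing lower bounds of `g * h`, `h`
and `1` shows that `degree` is a homomorphism. -/

section

variable {G : Type*}

section Monoid

variable [Monoid G] [LT G]

def IsAtomicFactorization (l : List G) (g : G) : Prop :=
  (∀ x ∈ l, x ⋖ 1) ∧ l.prod = g

@[simp]
theorem isAtomicFactorization_nil {g : G} : IsAtomicFactorization [] g ↔ g = 1 := by
  simp [IsAtomicFactorization, eq_comm]

namespace IsAtomicFactorization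

variable {l l' : List G} {a g g' : G}

theorem tail (h : IsAtomicFactorization (a :: l) g) : IsAtomicFactorization l l.prod :=
  ⟨fun x hx => h.1 x (List.mem_cons_of_mem a hx), rfl⟩

theorem append (h : IsAtomicFactorization l g) (h' : IsAtomicFactorization l' g') :
    IsAtomicFactorization (l ++ l') (g * g') := by
  refine ⟨fun x hx => ?_, by simp [h.2, h'.2]⟩
  rcases List.mem_append.1 hx with hx | hx
  exacts [h.1 x hx, h'.1 x hx]

end IsAtomicFactorization

end Monoid

section Group

variable [Group G] [PartialOrder G] [MulRightMono G]

theorem CovBy.mul_right {a b : G} (h : a ⋖ b) (c : G) : a * c ⋖ b * c :=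
  (apply_covBy_apply_iff (OrderIso.mulRight c)).2 h

namespace IsAtomicFactorization

variable {l : List G} {a g : G}

theorem covBy_tail_prod (h : IsAtomicFactorization (a :: l) g) : g ⋖ l.prod := by
  simpa [← h.2] using (h.1 a List.mem_cons_self).mul_right l.prod

theorem cons_of_covBy {m : G} (hgm : g ⋖ m) (hm : IsAtomicFactorization l m) :
    IsAtomicFactorization (g * m⁻¹ :: l) g := by
  refine ⟨fun x hx => ?_, by simp [hm.2]⟩
  rcases List.mem_cons.1 hx with rfl | hx
  · simpa using hgm.mul_right m⁻¹
  · exact hm.1 x hx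

theorem le_one (h : IsAtomicFactorization l g) : g ≤ 1 := by
  induction l generalizing g with
  | nil => exact (isAtomicFactorization_nil.1 h).le
  | cons a l ih => exact h.covBy_tail_prod.le.trans (ih h.tail)

theorem eq_nil_iff (h : IsAtomicFactorization l g) : l = [] ↔ g = 1 := by
  refine ⟨fun hl => isAtomicFactorization_nil.1 (hl ▸ h), fun hg => ?_⟩
  cases l with
  | nil => rfl
  | cons a l => exact absurd (hg ▸ h.covBy_tail_prod.lt) h.tail.le_one.not_gt

end IsAtomicFactorization

end Group

section Noetherian

variable [Lattice G]

namespace IsLatticeNoetherian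

theorem wellFoundedGT_Iic (hG : IsLatticeNoetherian G) (a : G) : WellFoundedGT (Set.Iic a) := by
  rw [wellFoundedGT_iff_monotone_chain_condition]
  intro f
  obtain ⟨N, hN⟩ := hG.1 (fun n => f n) (fun _ _ hij => f.mono hij) ⟨a, fun n => (f n).2⟩
  exact ⟨N, fun m hm => Subtype.ext (hN m hm).symm⟩

theorem wellFoundedLT_Ici (hG : IsLatticeNoetherian G) (a : G) : WellFoundedLT (Set.Ici a) := by
  rw [← wellFoundedGT_dual_iff, wellFoundedGT_iff_monotone_chain_condition]
  intro f
  obtain ⟨N, hN⟩ := hG.2 (fun n => ((OrderDual.ofDual (f n) : Set.Ici a) : G))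
    (fun _ _ hij => f.mono hij) ⟨a, fun n => (OrderDual.ofDual (f n)).2⟩
  exact ⟨N, fun m hm => congrArg OrderDual.toDual (Subtype.ext (hN m hm).symm)⟩

theorem exists_covBy_le_of_lt (hG : IsLatticeNoetherian G) {a b : G} (hab : a < b) :
    ∃ c, a ⋖ c ∧ c ≤ b := by
  have := hG.wellFoundedLT_Ici a
  obtain ⟨c, hc, hcb⟩ := (IsAtomic.eq_bot_or_exists_atom_le (⟨b, hab.le⟩ : Set.Ici a)).resolve_left
    fun h => hab.ne (congrArg Subtype.val h).symm
  exact ⟨c, Set.Ici.isAtom_iff.1 hc, hcb⟩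

end IsLatticeNoetherian

variable [Group G] [MulRightMono G]

theorem exists_isAtomicFactorization (hG : IsLatticeNoetherian G) {g : G} (hg : g ≤ 1) :
    ∃ l, IsAtomicFactorization l g := by
  suffices ∀ x : Set.Iic (1 : G), ∃ l, IsAtomicFactorization l (x : G) from this ⟨g, hg⟩
  have := hG.wellFoundedGT_Iic 1
  intro x
  induction x using WellFoundedGT.induction with
  | _ x ih =>
  rcases x.2.lt_or_eq with hx | hx
  · obtain ⟨m, hxm, hm⟩ := hG.exists_covBy_le_of_lt hx
    obtain ⟨l, hl⟩ := ih ⟨m, hm⟩ hxm.lt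
    exact ⟨_, hl.cons_of_covBy hxm⟩
  · exact ⟨[], isAtomicFactorization_nil.2 hx⟩

end Noetherian

open Classical in
noncomputable def negDegree [Monoid G] [LT G] (g : G) : ℕ :=
  if h : ∃ l, IsAtomicFactorization l g then h.choose.length else 0

/-- Meaningful only for `x ≤ y`, when `x * y⁻¹ ≤ 1`. -/
noncomputable def intervalLength [Group G] [LT G] (x y : G) : ℕ :=
  negDegree (x * y⁻¹)

@[simp]
theorem intervalLength_mul_right [Group G] [LT G] (x y c : G) :
    intervalLength (x * c) (y * c) = intervalLength x y := by
  simp [intervalLength, mul_assoc]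

noncomputable def degree [Group G] [Lattice G] (g : G) : ℤ :=
  intervalLength (g ⊓ 1) 1 - intervalLength (g ⊓ 1) g

section Modular

variable [Lattice G] [IsModularLattice G] [Group G] [MulRightMono G]

theorem IsAtomicFactorization.length_eq (hG : IsLatticeNoetherian G) {l l' : List G} {g : G}
    (hl : IsAtomicFactorization l g) (hl' : IsAtomicFactorization l' g) :
    l.length = l'.length := by
  induction hn : l.length using Nat.strong_induction_on generalizing g l l' with
  | _ n ih =>
  rcases l with _ | ⟨a, s⟩ <;> rcases l' with _ | ⟨b, t⟩
  · exact hn.symm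
  · exact absurd (hl'.eq_nil_iff.2 (hl.eq_nil_iff.1 rfl)) (List.cons_ne_nil b t)
  · exact absurd (hl.eq_nil_iff.2 (hl'.eq_nil_iff.1 rfl)) (List.cons_ne_nil a s)
  subst hn
  have hgA := hl.covBy_tail_prod
  have hgB := hl'.covBy_tail_prod
  by_cases hAB : s.prod = t.prod
  · simpa using ih s.length (by simp) hl.tail (hAB ▸ hl'.tail) rfl
  have hinf : s.prod ⊓ t.prod = g := hgA.wcovBy.inf_eq hgB.wcovBy hAB
  obtain ⟨u, hu⟩ := exists_isAtomicFactorization hG (sup_le hl.tail.le_one hl'.tail.le_one)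
  have hsu := ih s.length (by simp) hl.tail
    (hu.cons_of_covBy (covBy_sup_of_inf_covBy_right (hinf.symm ▸ hgB))) rfl
  have hut := ih (u.length + 1) (by simp [hsu])
    (hu.cons_of_covBy (covBy_sup_of_inf_covBy_left (hinf.symm ▸ hgA))) hl'.tail rfl
  simp only [List.length_cons] at hsu ⊢
  omega

variable (hG : IsLatticeNoetherian G)
include hG

theorem negDegree_eq_length {l : List G} {g : G} (h : IsAtomicFactorization l g) :
    negDegree g = l.length := by
  have hex : ∃ l, IsAtomicFactorization l g := ⟨l, h⟩
  rw [negDegree, dif_pos hex]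
  exact hex.choose_spec.length_eq hG h

theorem negDegree_mul {a b : G} (ha : a ≤ 1) (hb : b ≤ 1) :
    negDegree (a * b) = negDegree a + negDegree b := by
  obtain ⟨la, hla⟩ := exists_isAtomicFactorization hG ha
  obtain ⟨lb, hlb⟩ := exists_isAtomicFactorization hG hb
  rw [negDegree_eq_length hG (hla.append hlb), negDegree_eq_length hG hla,
    negDegree_eq_length hG hlb, List.length_append]

theorem intervalLength_self (x : G) : intervalLength x x = 0 := by
  simpa [intervalLength] using negDegree_eq_length hG (isAtomicFactorization_nil.2 rfl)

theorem intervalLength_add {x y z : G} (hxy : x ≤ y) (hyz : y ≤ z) :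
    intervalLength x z = intervalLength x y + intervalLength y z := by
  rw [intervalLength, intervalLength, intervalLength,
    ← negDegree_mul hG (mul_inv_le_one_iff_le.2 hxy) (mul_inv_le_one_iff_le.2 hyz), mul_assoc,
    inv_mul_cancel_left]

theorem degree_eq_sub {g m : G} (hmg : m ≤ g) (hm1 : m ≤ 1) :
    degree g = intervalLength m 1 - intervalLength m g := by
  have hm : m ≤ g ⊓ 1 := le_inf hmg hm1
  rw [degree, intervalLength_add hG hm inf_le_right, intervalLength_add hG hm inf_le_left]
  push_cast
  ring

theorem degree_mul (g h : G) : degree (g * h) = degree g + degree h := by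
  set m := g * h ⊓ h ⊓ 1
  have hmgh : m ≤ g * h := inf_le_left.trans inf_le_left
  have hmh : m ≤ h := inf_le_left.trans inf_le_right
  have hm1 : m ≤ 1 := inf_le_right
  have hg := degree_eq_sub hG (mul_inv_le_iff_le_mul.2 hmgh) (mul_inv_le_one_iff_le.2 hmh)
  rw [← intervalLength_mul_right (m * h⁻¹) 1 h, ← intervalLength_mul_right (m * h⁻¹) g h,
    inv_mul_cancel_right, one_mul] at hg
  rw [degree_eq_sub hG hmgh hm1, degree_eq_sub hG hmh hm1, hg]
  ring

theorem degree_eq_length {l : List G} {g : G} (h : IsAtomicFactorization l g) :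
    degree g = l.length := by
  rw [degree_eq_sub hG le_rfl h.le_one, intervalLength_self hG, intervalLength, inv_one, mul_one,
    negDegree_eq_length hG h, Nat.cast_zero, sub_zero]

theorem eq_degree {d : G → ℤ} (hd : ∀ a b, d (a * b) = d a + d b)
    (hcone : ∀ l g, IsAtomicFactorization l g → d g = l.length) : d = degree := by
  have hlen : ∀ {x y : G}, x ≤ y → d (x * y⁻¹) = intervalLength x y := fun hxy => by
    obtain ⟨l, hl⟩ := exists_isAtomicFactorization hG (mul_inv_le_one_iff_le.2 hxy)
    rw [hcone l _ hl, intervalLength, negDegree_eq_length hG hl]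
  funext g
  have hsplit : d ((g ⊓ 1) * 1⁻¹) = d ((g ⊓ 1) * g⁻¹) + d g := by
    rw [← hd, inv_mul_cancel_right, inv_one, mul_one]
  rw [degree, ← hlen inf_le_right, ← hlen inf_le_left]
  linarith

end Modular

end

/-- In a modular noetherian right ℓ-group, any two atomic factorizations (products of
dual atoms `x ⋖ 1`) of `g ≤ 1` have the same length, and the resulting degree function
on the negative cone extends uniquely to a group homomorphism `deg : G → ℤ`. -/
theorem atomic_factorizations_and_degree {G : Type*} [Lattice G] [Group G]
    [CovariantClass G G (Function.swap (· * ·)) (· ≤ ·)] [IsModularLattice G]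
    (hG : IsLatticeNoetherian G) :
    (∀ g : G, g ≤ 1 → ∀ l l' : List G,
      (∀ x ∈ l, x ⋖ 1) → l.prod = g → (∀ x ∈ l', x ⋖ 1) → l'.prod = g →
      l.length = l'.length) ∧
    (∃! d : G → ℤ, (∀ a b : G, d (a * b) = d a + d b) ∧
      ∀ g : G, g ≤ 1 → ∀ l : List G, (∀ x ∈ l, x ⋖ 1) → l.prod = g →
        d g = l.length) := by
  refine ⟨fun g _ l l' hl hlg hl' hl'g => IsAtomicFactorization.length_eq hG ⟨hl, hlg⟩ ⟨hl', hl'g⟩,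
    degree, ⟨degree_mul hG, fun g _ l hl hlg => degree_eq_length hG ⟨hl, hlg⟩⟩, ?_⟩
  rintro d ⟨hd, hcone⟩
  exact eq_degree hG hd fun l g hl => hcone g hl.le_one l hl.1 hl.2
end

section
/- In a modular noetherian right ℓ-group G with degree homomorphism deg : G → ℤ, the parallelogram identity deg(g) + deg(h) = deg(g ∨ h) + deg(g ∧ h) holds for all g, h ∈ G. -/
namespace IsLatticeNoetherian

variable {L : Type*} [Lattice L]

theorem wellFoundedGT_Iic_s9 (hL : IsLatticeNoetherian L) (z : L) : WellFoundedGT (Set.Iic z) := by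
  rw [wellFoundedGT_iff_monotone_chain_condition]
  intro a
  obtain ⟨N, hN⟩ := hL.1 (fun n => a n) (fun _ _ hmn => a.monotone hmn) ⟨z, fun n => (a n).2⟩
  exact ⟨N, fun m hm => Subtype.ext (hN m hm).symm⟩

theorem wellFoundedLT_Ici_s9 (hL : IsLatticeNoetherian L) (c : L) : WellFoundedLT (Set.Ici c) := by
  rw [← wellFoundedGT_dual_iff, wellFoundedGT_iff_monotone_chain_condition]
  intro a
  obtain ⟨N, hN⟩ := hL.2 (fun n => ((OrderDual.ofDual (a n) : Set.Ici c) : L))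
    (fun _ _ hmn => a.monotone hmn) ⟨c, fun n => (OrderDual.ofDual (a n)).2⟩
  exact ⟨N, fun m hm => congrArg OrderDual.toDual (Subtype.ext (hN m hm).symm)⟩

theorem isStronglyCoatomic (hL : IsLatticeNoetherian L) : IsStronglyCoatomic L where
  exists_le_covBy_of_lt c z hcz := by
    have := hL.wellFoundedGT_Iic_s9 z
    obtain ⟨m, hcm, hmz⟩ :=
      exists_le_covBy_of_lt (show (⟨c, hcz.le⟩ : Set.Iic z) < ⊤ from hcz)
    exact ⟨m, hcm, Set.Iic.isCoatom_iff.1 (covBy_top_iff.1 hmz)⟩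

end IsLatticeNoetherian

theorem CovBy.sup_covBy_sup_of_inf_le {L : Type*} [Lattice L] [IsModularLattice L] {a m : L}
    (hma : m ⋖ a) {b : L} (hab : a ⊓ b ≤ m) : m ⊔ b ⋖ a ⊔ b := by
  have hinf : a ⊓ (m ⊔ b) = m := by
    rw [inf_comm, sup_inf_assoc_of_le b hma.le, inf_comm, sup_eq_left.2 hab]
  have := covBy_sup_of_inf_covBy_left (b := m ⊔ b) (by rwa [hinf])
  rwa [← sup_assoc, sup_eq_left.2 hma.le] at this

theorem apply_add_apply_eq_sup_add_inf_of_covBy {L : Type*} [Lattice L] [IsModularLattice L]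
    [IsStronglyCoatomic L] (hwf : ∀ c : L, WellFoundedLT (Set.Ici c))
    {v : L → ℤ} (hv : ∀ x y : L, x ⋖ y → v x = v y + 1) (a b : L) :
    v a + v b = v (a ⊔ b) + v (a ⊓ b) := by
  suffices H : ∀ c : L, c ≤ b → ∀ a : Set.Ici c, (a : L) ⊓ b = c →
      v a + v b = v (a ⊔ b) + v c from
    H (a ⊓ b) inf_le_right ⟨a, inf_le_left⟩ rfl
  intro c hcb a
  induction a using (hwf c).wf.induction with
  | _ a IH =>
    intro hab
    by_cases hle : (a : L) ≤ b
    · rw [sup_eq_right.2 hle, (inf_eq_left.2 hle).symm.trans hab, add_comm]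
    have hca : c < a := lt_of_le_of_ne a.2 fun h => hle (h ▸ hab ▸ inf_le_right)
    obtain ⟨m, hcm, hma⟩ := exists_le_covBy_of_lt hca
    have hmb : m ⊓ b = c :=
      le_antisymm (hab ▸ inf_le_inf_right b hma.le) (le_inf hcm hcb)
    have hIH := IH ⟨m, hcm⟩ (Subtype.mk_lt_mk.2 hma.lt) hmb
    have hsup := hv _ _ (hma.sup_covBy_sup_of_inf_le (b := b) (hab.trans_le hcm))
    rw [hv _ _ hma, hsup] at hIH
    omega

theorem apply_eq_apply_add_one_of_covBy {G : Type*} [Group G] [Preorder G]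
    [CovariantClass G G (Function.swap (· * ·)) (· ≤ ·)]
    {d : G → ℤ} (hd : ∀ a b : G, d (a * b) = d a + d b) (hatom : ∀ x : G, x ⋖ 1 → d x = 1)
    {x y : G} (hxy : x ⋖ y) : d x = d y + 1 := by
  have hdual : x * y⁻¹ ⋖ 1 := by
    simpa using (apply_covBy_apply_iff (OrderIso.mulRight y⁻¹)).2 hxy
  rw [← inv_mul_cancel_right x y, hd, hatom _ hdual, add_comm]

/-- The parallelogram identity for the degree homomorphism of a modular noetherian
right ℓ-group: `deg g + deg h = deg (g ⊔ h) + deg (g ⊓ h)`. -/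
theorem parallelogram_identity {G : Type*} [Lattice G] [Group G]
    [CovariantClass G G (Function.swap (· * ·)) (· ≤ ·)] [IsModularLattice G]
    (hG : IsLatticeNoetherian G)
    (d : G → ℤ) (hd : ∀ a b : G, d (a * b) = d a + d b)
    (hatom : ∀ x : G, x ⋖ 1 → d x = 1)
    (g h : G) :
    d g + d h = d (g ⊔ h) + d (g ⊓ h) :=
  have := hG.isStronglyCoatomic
  apply_add_apply_eq_sup_add_inf_of_covBy hG.wellFoundedLT_Ici_s9
    (fun _ _ => apply_eq_apply_add_one_of_covBy hd hatom) g h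
end

section
/- Let G be a modular noetherian right ℓ-group with strong order unit s, and g ∈ G⁻. If g = g_k ⋯ g₁ is the right-normal and g = h₁ ⋯ h_k the left-normal factorization of g, then deg(h_i) = deg(g_i) for all 1 ≤ i ≤ k. -/
/-- The join in the dual left-invariant order: `g ⋎ h = (g⁻¹ ⊓ h⁻¹)⁻¹`. -/
def cjoin {G : Type*} [Lattice G] [Group G] (g h : G) : G := (g⁻¹ ⊓ h⁻¹)⁻¹

/-!
Write `a = s^i g`. Multiplying by `g` on the right and by `s^i` on the left (which preserves
`⊓` and `⊔` because `s` is normal) turns the two degrees into `d (s ⊓ a) - d s - d (1 ⊓ a)` and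
`d (a ⊔ 1) - d (a ⊔ s)`, so the claim is that `φ u = d (u ⊓ a) + d (u ⊔ a) - d u` takes the same
value at `u = 1` and `u = s`. Since `d` drops by one along every covering, modularity makes `φ`
invariant under coverings: for `u ⋖ v` one of `u ⊓ a ≤ v ⊓ a`, `u ⊔ a ≤ v ⊔ a` is a
covering and the other an equality. The chain conditions connect `1` to `s` by a finite chain
of coverings.
-/

theorem eq_of_le_of_forall_covBy {α : Type*} [PartialOrder α] [WellFoundedGT α]
    [IsStronglyAtomic α] {β : Sort*} {f : α → β} (hf : ∀ a b, a ⋖ b → f a = f b)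
    {a b : α} (hab : a ≤ b) : f a = f b := by
  induction a using WellFoundedGT.induction with
  | _ a ih =>
    obtain rfl | hlt := hab.eq_or_lt
    · rfl
    obtain ⟨c, hac, hcb⟩ := exists_covBy_le_of_lt hlt
    exact (hf a c hac).trans (ih c hac.lt hcb)

namespace IsLatticeNoetherian

variable {G : Type*} [Lattice G]

theorem wellFoundedGT_Icc (hG : IsLatticeNoetherian G) (u v : G) :
    WellFoundedGT (Set.Icc u v) := by
  refine wellFoundedGT_iff_monotone_chain_condition.2 fun f => ?_
  obtain ⟨N, hN⟩ := hG.1 (fun n => (f n : G)) f.monotone ⟨v, fun n => (f n).2.2⟩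
  exact ⟨N, fun m hm => Subtype.ext (hN m hm).symm⟩

theorem wellFoundedLT_Icc (hG : IsLatticeNoetherian G) (u v : G) :
    WellFoundedLT (Set.Icc u v) := by
  refine wellFoundedGT_iff_monotone_chain_condition (α := (Set.Icc u v)ᵒᵈ) |>.2 fun f => ?_
  obtain ⟨N, hN⟩ := hG.2 (fun n => ((OrderDual.ofDual (f n) : Set.Icc u v) : G))
    (fun _ _ h => f.monotone h) ⟨u, fun n => (OrderDual.ofDual (f n) : Set.Icc u v).2.1⟩
  exact ⟨N, fun m hm => Subtype.ext (hN m hm).symm⟩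

theorem eq_of_le_of_forall_covBy (hG : IsLatticeNoetherian G) {β : Sort*} {f : G → β}
    (hf : ∀ x y, x ⋖ y → f x = f y) {u v : G} (huv : u ≤ v) : f u = f v := by
  have := hG.wellFoundedGT_Icc u v
  have := hG.wellFoundedLT_Icc u v
  have hIcc : (Set.range (OrderEmbedding.subtype (· ∈ Set.Icc u v))).OrdConnected := by
    rw [OrderEmbedding.coe_subtype, Subtype.range_coe]
    exact Set.ordConnected_Icc
  exact _root_.eq_of_le_of_forall_covBy (f := fun x : Set.Icc u v => f x)
    (fun x y h => hf x y (h.image _ hIcc)) (a := ⟨u, le_rfl, huv⟩) (b := ⟨v, huv, le_rfl⟩) huv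

end IsLatticeNoetherian

section Modular

variable {L : Type*} [Lattice L] [IsModularLattice L]

theorem CovBy.inf_eq_and_sup_covBy_or_inf_covBy_and_sup_eq {x y : L} (h : x ⋖ y) (a : L) :
    (x ⊓ a = y ⊓ a ∧ x ⊔ a ⋖ y ⊔ a) ∨ (x ⊓ a ⋖ y ⊓ a ∧ x ⊔ a = y ⊔ a) := by
  by_cases hya : y ⊓ a ≤ x
  · left
    refine ⟨le_antisymm (inf_le_inf_right a h.le) (le_inf hya inf_le_right), ?_⟩
    have hx : y ⊓ (x ⊔ a) = x := by
      rw [inf_comm, sup_inf_assoc_of_le a h.le, inf_comm, sup_eq_left.2 hya]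
    have := covBy_sup_of_inf_covBy_left (hx.symm ▸ h : y ⊓ (x ⊔ a) ⋖ y)
    rwa [← sup_assoc, sup_eq_left.2 h.le] at this
  · right
    have hy : x ⊔ y ⊓ a = y :=
      (h.eq_or_eq le_sup_left (sup_le h.le inf_le_left)).resolve_left
        fun he => hya (he ▸ le_sup_right)
    refine ⟨?_, le_antisymm (sup_le_sup_right h.le a)
      (sup_le (hy ▸ sup_le_sup_left inf_le_right x) le_sup_right)⟩
    have := inf_covBy_of_covBy_sup_left (hy.symm ▸ h : x ⋖ x ⊔ y ⊓ a)
    rwa [← inf_assoc, inf_eq_left.2 h.le] at this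

theorem inf_add_sup_sub_eq_of_covBy {M : Type*} [AddCommGroup M] {d : L → M} {c : M}
    (hd : ∀ x y, x ⋖ y → d x = d y + c) (a : L) {x y : L} (h : x ⋖ y) :
    d (x ⊓ a) + d (x ⊔ a) - d x = d (y ⊓ a) + d (y ⊔ a) - d y := by
  rcases h.inf_eq_and_sup_covBy_or_inf_covBy_and_sup_eq a with ⟨hinf, hsup⟩ | ⟨hinf, hsup⟩
  · rw [hinf, hd _ _ hsup, hd _ _ h]; abel
  · rw [hsup, hd _ _ hinf, hd _ _ h]; abel

theorem IsLatticeNoetherian.inf_add_sup_sub_eq (hG : IsLatticeNoetherian L) {M : Type*}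
    [AddCommGroup M] {d : L → M} {c : M} (hd : ∀ x y, x ⋖ y → d x = d y + c) (a : L)
    {u v : L} (huv : u ≤ v) :
    d (u ⊓ a) + d (u ⊔ a) - d u = d (v ⊓ a) + d (v ⊔ a) - d v :=
  hG.eq_of_le_of_forall_covBy (fun _ _ => inf_add_sup_sub_eq_of_covBy hd a) huv

end Modular

section Group

variable {G : Type*} [Group G]

theorem degree_mul_inv {d : G → ℤ} (hd : ∀ a b : G, d (a * b) = d a + d b) (x y : G) :
    d (x * y⁻¹) = d x - d y := by
  have := hd (x * y⁻¹) y
  rw [inv_mul_cancel_right] at this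
  omega

theorem degree_one {d : G → ℤ} (hd : ∀ a b : G, d (a * b) = d a + d b) : d 1 = 0 := by
  simpa using degree_mul_inv hd 1 1

variable [Lattice G]

theorem isNormal_one : IsNormal (1 : G) := fun x y => by simp

theorem IsNormal.mul_s11 {s t : G} (hs : IsNormal s) (ht : IsNormal t) : IsNormal (s * t) :=
  fun x y => by simp only [mul_assoc, (ht x y).1, (ht x y).2, (hs _ _).1, (hs _ _).2, and_self]

theorem IsNormal.pow_s11 {s : G} (hs : IsNormal s) (n : ℕ) : IsNormal (s ^ n) := by
  induction n with
  | zero => simpa using isNormal_one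
  | succ n ih => simpa only [pow_succ] using ih.mul_s11 hs

theorem degree_sup_mul_inv_sup {d : G → ℤ} (hd : ∀ a b : G, d (a * b) = d a + d b)
    {x : G} (hx : IsNormal x⁻¹) (g s : G) :
    d ((g ⊔ x) * (g ⊔ x * s)⁻¹) = d (x⁻¹ * g ⊔ 1) - d (x⁻¹ * g ⊔ s) := by
  have hconj : ∀ y, x⁻¹ * (g ⊔ y) = x⁻¹ * g ⊔ x⁻¹ * y := fun y => (hx g y).2
  calc d ((g ⊔ x) * (g ⊔ x * s)⁻¹)
      = d (x⁻¹ * (g ⊔ x)) - d (x⁻¹ * (g ⊔ x * s)) := by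
        rw [degree_mul_inv hd, hd x⁻¹, hd x⁻¹]; ring
    _ = d (x⁻¹ * g ⊔ 1) - d (x⁻¹ * g ⊔ s) := by
        rw [hconj, hconj, inv_mul_cancel, inv_mul_cancel_left]

variable [MulRightMono G]

theorem degree_covBy {d : G → ℤ} (hd : ∀ a b : G, d (a * b) = d a + d b)
    (hatom : ∀ x : G, x ⋖ 1 → d x = 1) {x y : G} (h : x ⋖ y) : d x = d y + 1 := by
  have hcov : x * y⁻¹ ⋖ 1 := by
    simpa using (apply_covBy_apply_iff (OrderIso.mulRight y⁻¹)).2 h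
  have := hatom _ hcov
  rw [degree_mul_inv hd] at this
  omega

theorem inv_cjoin_mul (g y : G) : (cjoin g y)⁻¹ * g = 1 ⊓ y⁻¹ * g := by
  rw [cjoin, inv_inv, inf_mul, inv_mul_cancel]

theorem degree_inv_cjoin_mul_cjoin {d : G → ℤ} (hd : ∀ a b : G, d (a * b) = d a + d b)
    {s : G} (hs : IsNormal s) (g x : G) :
    d ((cjoin g (x * s))⁻¹ * cjoin g x) = d (s ⊓ x⁻¹ * g) - d s - d (1 ⊓ x⁻¹ * g) := by
  have hmul : s * (1 ⊓ (x * s)⁻¹ * g) = s ⊓ x⁻¹ * g := by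
    rw [(hs _ _).1, mul_one, mul_inv_rev, mul_assoc, mul_inv_cancel_left]
  have hshift := congrArg d hmul
  rw [hd] at hshift
  calc d ((cjoin g (x * s))⁻¹ * cjoin g x)
      = d ((cjoin g (x * s))⁻¹ * g) - d ((cjoin g x)⁻¹ * g) := by
        rw [← degree_mul_inv hd]; congr 1; group
    _ = d (s ⊓ x⁻¹ * g) - d s - d (1 ⊓ x⁻¹ * g) := by
        rw [inv_cjoin_mul, inv_cjoin_mul]; omega

end Group

theorem left_right_symmetry_of_degrees_general {G : Type*} [Lattice G] [Group G]
    [CovariantClass G G (Function.swap (· * ·)) (· ≤ ·)] [IsModularLattice G]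
    (hG : IsLatticeNoetherian G) (s : G) (hs : IsStrongOrderUnit s)
    (d : G → ℤ) (hd : ∀ a b : G, d (a * b) = d a + d b)
    (hatom : ∀ x : G, x ⋖ 1 → d x = 1)
    (g : G)
    (k : ℕ) :
    ∀ i : ℕ, 1 ≤ i → i ≤ k →
      d ((cjoin g (s ^ (-(i : ℤ) + 1)))⁻¹ * cjoin g (s ^ (-(i : ℤ)))) =
        d ((g ⊔ s ^ (-(i : ℤ))) * (g ⊔ s ^ (-(i : ℤ) + 1))⁻¹) := by
  intro i _ _
  obtain ⟨hs1, hsn, -⟩ := hs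
  have hx : IsNormal (s ^ (-(i : ℤ)))⁻¹ := by
    simpa only [zpow_neg, inv_inv, zpow_natCast] using hsn.pow_s11 i
  have hinv := hG.inf_add_sup_sub_eq (fun _ _ => degree_covBy hd hatom)
    ((s ^ (-(i : ℤ)))⁻¹ * g) hs1.le
  rw [zpow_add_one, degree_inv_cjoin_mul_cjoin hd hsn, degree_sup_mul_inv_sup hd hx]
  rw [degree_one hd, sup_comm 1, sup_comm s] at hinv
  omega

/-- In a modular noetherian right ℓ-group with strong order unit `s`, the right-normal
factors `g_i = (g ⊔ s^{-i})(g ⊔ s^{-(i-1)})⁻¹` and the left-normal factors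
`h_i = (g ⋎ s^{-(i-1)})⁻¹ (g ⋎ s^{-i})` of `g ≤ 1` have equal degrees. -/
theorem left_right_symmetry_of_degrees {G : Type*} [Lattice G] [Group G]
    [CovariantClass G G (Function.swap (· * ·)) (· ≤ ·)] [IsModularLattice G]
    (hG : IsLatticeNoetherian G) (s : G) (hs : IsStrongOrderUnit s)
    (d : G → ℤ) (hd : ∀ a b : G, d (a * b) = d a + d b)
    (hatom : ∀ x : G, x ⋖ 1 → d x = 1)
    (g : G) (hg : g ≤ 1)
    (k : ℕ) (hk : s ^ (-(k : ℤ)) ≤ g) (hkmin : ∀ j : ℕ, j < k → ¬ s ^ (-(j : ℤ)) ≤ g) :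
    ∀ i : ℕ, 1 ≤ i → i ≤ k →
      d ((cjoin g (s ^ (-(i : ℤ) + 1)))⁻¹ * cjoin g (s ^ (-(i : ℤ)))) =
        d ((g ⊔ s ^ (-(i : ℤ))) * (g ⊔ s ^ (-(i : ℤ) + 1))⁻¹) :=
  left_right_symmetry_of_degrees_general hG s hs d hd hatom g k
end

section
/- Let G be a modular noetherian right ℓ-group with s^{-1} = ⋀ X(G⁻) a strong order unit. Then an element g ∈ G⁻ is meet-irreducible in G⁻ if and only if the interval [g, e] is a chain. -/
section Lattice

variable {α : Type*} [Lattice α]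

theorem IsLatticeNoetherian.wellFoundedOn_lt (hG : IsLatticeNoetherian α) {S : Set α}
    (hS : BddBelow S) : S.WellFoundedOn (· < ·) := by
  rw [Set.wellFoundedOn_iff_no_descending_seq]
  intro f hfS
  obtain ⟨b, hb⟩ := hS
  have hf : StrictAnti f := fun _ _ h => f.map_rel_iff.2 h
  obtain ⟨N, hN⟩ := hG.2 f hf.antitone ⟨b, fun n => hb (hfS n)⟩
  exact (hf N.lt_succ_self).ne (hN _ N.le_succ)

theorem IsLatticeNoetherian.wellFoundedOn_gt (hG : IsLatticeNoetherian α) {S : Set α}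
    (hS : BddAbove S) : S.WellFoundedOn (· > ·) := by
  rw [Set.wellFoundedOn_iff_no_descending_seq]
  intro f hfS
  obtain ⟨b, hb⟩ := hS
  have hf : StrictMono f := fun _ _ h => f.map_rel_iff.2 h
  obtain ⟨N, hN⟩ := hG.1 f hf.monotone ⟨b, fun n => hb (hfS n)⟩
  exact (hf N.lt_succ_self).ne' (hN _ N.le_succ)

theorem IsLatticeNoetherian.isStronglyAtomic (hG : IsLatticeNoetherian α) :
    IsStronglyAtomic α where
  exists_covBy_le_of_lt a b hab := by
    have hbdd : BddBelow (Set.Ioc a b) := ⟨a, fun _ h => h.1.le⟩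
    obtain ⟨c, hc⟩ := (hG.wellFoundedOn_lt hbdd).exists_minimal ⟨b, hab, le_rfl⟩
    obtain ⟨hac, hcb⟩ := hc.prop
    exact ⟨c, ⟨hac, fun z haz hzc => hc.not_prop_of_lt hzc ⟨haz, hzc.le.trans hcb⟩⟩, hcb⟩

theorem IsLatticeNoetherian.isStronglyCoatomic_s14 (hG : IsLatticeNoetherian α) :
    IsStronglyCoatomic α where
  exists_le_covBy_of_lt a b hab := by
    have hbdd : BddAbove (Set.Ico a b) := ⟨b, fun _ h => h.2.le⟩
    obtain ⟨c, hc⟩ := (hG.wellFoundedOn_gt hbdd).exists_maximal ⟨a, le_rfl, hab⟩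
    obtain ⟨hac, hcb⟩ := hc.prop
    exact ⟨c, hac, ⟨hcb, fun z hcz hzb => hc.not_prop_of_gt hcz ⟨hac.trans hcz.le, hzb⟩⟩⟩

theorem CovBy.inf_eq_of_ne {g p q : α} (hp : g ⋖ p) (hq : g ⋖ q) (hpq : p ≠ q) : p ⊓ q = g := by
  refine (hp.eq_or_eq (le_inf hp.le hq.le) inf_le_left).resolve_right fun h => hpq ?_
  exact (hq.eq_or_eq hp.le (inf_eq_left.1 h)).resolve_left hp.ne'

def IsComplementedIcc (a b : α) : Prop :=
  ∀ x, a ≤ x → x ≤ b → ∃ z, a ≤ z ∧ z ≤ b ∧ x ⊓ z = a ∧ x ⊔ z = b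

theorem isComplementedIcc_of_isGLB_covBy [IsModularLattice α] (hG : IsLatticeNoetherian α)
    {c t : α} (hc : IsGLB {x | x ⋖ t} c) : IsComplementedIcc c t := by
  intro a hca hat
  obtain ⟨z, hz⟩ := (hG.wellFoundedOn_lt (S := {z | c ≤ z ∧ z ≤ t ∧ a ⊔ z = t})
    ⟨c, fun _ h => h.1⟩).exists_minimal ⟨t, hca.trans hat, le_rfl, sup_eq_right.2 hat⟩
  obtain ⟨hcz, hzt, hsup⟩ := hz.prop
  refine ⟨z, hcz, hzt, le_antisymm (hc.2 fun x hx => ?_) (le_inf hca hcz), hsup⟩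
  -- otherwise `x ⊓ z` would be a smaller candidate than `z`
  by_contra hax
  have hjoin : a ⊓ z ⊔ x = t :=
    (hx.eq_or_eq le_sup_right (sup_le (inf_le_left.trans hat) hx.le)).resolve_left
      fun h => hax (h ▸ le_sup_left)
  have hz_eq : a ⊓ z ⊔ x ⊓ z = z := by
    rw [← sup_inf_assoc_of_le x inf_le_right, hjoin, inf_eq_right.2 hzt]
  have hsup' : a ⊔ x ⊓ z = t := by
    refine le_antisymm (sup_le hat (inf_le_right.trans hzt)) ?_
    calc t = a ⊔ z := hsup.symm
      _ = a ⊔ (a ⊓ z ⊔ x ⊓ z) := by rw [hz_eq]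
      _ ≤ a ⊔ x ⊓ z := sup_le le_sup_left (sup_le_sup_right inf_le_left _)
  have hlt : x ⊓ z < z := inf_lt_right.2 fun hzx => hax (inf_le_right.trans hzx)
  exact hz.not_prop_of_lt hlt ⟨le_inf (hc.1 hx) hcz, inf_le_right.trans hzt, hsup'⟩

theorem IsComplementedIcc.inf_right [IsModularLattice α] {a b b' : α}
    (h : IsComplementedIcc a b) (hab' : a ≤ b') (hb' : b' ≤ b) : IsComplementedIcc a b' := by
  intro x hax hxb'
  obtain ⟨z, haz, -, hinf, hsup⟩ := h x hax (hxb'.trans hb')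
  refine ⟨z ⊓ b', le_inf haz hab', inf_le_right, ?_, ?_⟩
  · rw [← inf_assoc, hinf, inf_eq_left.2 hab']
  · rw [← sup_inf_assoc_of_le z hxb', hsup, inf_eq_right.2 hb']

theorem IsComplementedIcc.eq_of_forall_covBy [IsStronglyAtomic α] {a b v : α}
    (h : IsComplementedIcc a b) (hav : a ⋖ v) (hvb : v ≤ b)
    (huniq : ∀ r, a ⋖ r → r ≤ b → r = v) : v = b := by
  obtain ⟨z, haz, hzb, hinf, hsup⟩ := h v hav.le hvb
  rcases haz.eq_or_lt with rfl | hlt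
  · rwa [sup_eq_left.2 hav.le] at hsup
  · obtain ⟨r, har, hrz⟩ := exists_covBy_le_of_lt hlt
    have hvz : v ≤ z := huniq r har (hrz.trans hzb) ▸ hrz
    exact absurd (hinf ▸ (inf_eq_left.2 hvz).symm) hav.ne'

def BranchesBelow (t v : α) : Prop :=
  ∃ p q, v ⋖ p ∧ v ⋖ q ∧ p ≤ t ∧ q ≤ t ∧ p ≠ q

theorem branchesBelow_inf [IsStronglyAtomic α] {a b t : α} (ha : a ≤ t) (hb : b ≤ t)
    (hab : ¬a ≤ b) (hba : ¬b ≤ a) : BranchesBelow t (a ⊓ b) := by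
  obtain ⟨p, hp, hpa⟩ := exists_covBy_le_of_lt (inf_lt_left.2 hab)
  obtain ⟨q, hq, hqb⟩ := exists_covBy_le_of_lt (inf_lt_right.2 hba)
  exact ⟨p, q, hp, hq, hpa.trans ha, hqb.trans hb,
    fun hpq => hp.lt.not_ge (le_inf hpa (hpq ▸ hqb))⟩

end Lattice

section IsNormal

variable {G : Type*} [Lattice G] [Group G] {s : G}

theorem IsNormal.mul_le_mul_iff_left (hs : IsNormal s) {x y : G} :
    s * x ≤ s * y ↔ x ≤ y := by
  constructor
  · intro h
    have : s * (x ⊓ y) = s * x := by rw [(hs x y).1, inf_eq_left.2 h]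
    exact inf_eq_left.1 (mul_left_cancel this)
  · intro h
    calc s * x = s * (x ⊓ y) := by rw [inf_eq_left.2 h]
      _ = s * x ⊓ s * y := (hs x y).1
      _ ≤ s * y := inf_le_right

theorem IsNormal.inv_s14 (hs : IsNormal s) : IsNormal s⁻¹ := by
  intro x y
  constructor <;> apply mul_left_cancel (a := s) <;>
    simp only [(hs _ _).1, (hs _ _).2, mul_inv_cancel_left]

end IsNormal

section RightLatticeGroup

variable {G : Type*} [Lattice G] [Group G] [MulRightMono G]

theorem isGLB_covBy_mul_right {c : G} (hc : IsGLB {x | x ⋖ 1} c) (t : G) :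
    IsGLB {x | x ⋖ t} (c * t) := by
  have hset : {x : G | x ⋖ t} = OrderIso.mulRight t⁻¹ ⁻¹' {x | x ⋖ 1} := by
    ext x
    simpa using (apply_covBy_apply_iff (OrderIso.mulRight t⁻¹) (a := x) (b := t)).symm
  rw [hset, OrderIso.isGLB_preimage]
  simpa using hc

theorem mul_le_of_covBy {c u v : G} (hc : IsGLB {x | x ⋖ 1} c) (huv : u ⋖ v) : c * v ≤ u :=
  (isGLB_covBy_mul_right hc v).1 huv

variable [IsModularLattice G] {s v' v : G}

theorem mul_inf_one_eq_of_forall_covBy (hG : IsLatticeNoetherian G) (hs : IsNormal s)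
    (hc : IsGLB {x | x ⋖ 1} s⁻¹) (hvv : v' ⋖ v) (hv1 : v ≤ 1)
    (huniq : ∀ r, v' ⋖ r → r ≤ 1 → r = v) : s * v' ⊓ 1 = v := by
  have := hG.isStronglyAtomic
  have hcompl : IsComplementedIcc v' (s * v') := by
    simpa using isComplementedIcc_of_isGLB_covBy hG (isGLB_covBy_mul_right hc (s * v'))
  have hv : v ≤ s * v' ⊓ 1 :=
    le_inf (by simpa using hs.mul_le_mul_iff_left.2 (mul_le_of_covBy hc hvv)) hv1
  refine ((hcompl.inf_right (hvv.le.trans hv) inf_le_left).eq_of_forall_covBy hvv hv ?_).symm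
  exact fun r hr hrx => huniq r hr (hrx.trans inf_le_right)

theorem inv_mul_eq_inv_inf_of_covBy {p : G} (hs : IsNormal s) (hc : IsGLB {x | x ⋖ 1} s⁻¹)
    (hsv : s * v' ⊓ 1 = v) (hvv : v' ⋖ v) (hvp : v ⋖ p) (hp1 : p ≤ 1) :
    s⁻¹ * p = s⁻¹ ⊓ v := by
  have hinv : s⁻¹ * v = v' ⊓ s⁻¹ := by
    rw [← hsv, (hs.inv_s14 _ _).1, inv_mul_cancel_left, mul_one]
  have hpw : s⁻¹ * p ≤ s⁻¹ ⊓ v :=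
    le_inf (by simpa using hs.inv_s14.mul_le_mul_iff_left.2 hp1) (mul_le_of_covBy hc hvp)
  have hv'w : v' ⊓ (s⁻¹ ⊓ v) = s⁻¹ * v := by
    rw [hinv, inf_left_comm, inf_eq_left.2 hvv.le, inf_comm]
  have hA : (s⁻¹ * p ⊔ v') ⊓ (s⁻¹ ⊓ v) = s⁻¹ * p := by
    rw [sup_inf_assoc_of_le v' hpw, hv'w, sup_eq_left.2 (hs.inv_s14.mul_le_mul_iff_left.2 hvp.le)]
  rcases hvv.eq_or_eq le_sup_right (sup_le (mul_le_of_covBy hc hvp) hvv.le) with h | h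
  · rw [h, hv'w] at hA
    exact absurd (mul_left_cancel hA) hvp.ne
  · rwa [h, inf_eq_right.2 inf_le_right, eq_comm] at hA

theorem BranchesBelow.of_covBy (hG : IsLatticeNoetherian G) (hs : IsNormal s)
    (hc : IsGLB {x | x ⋖ 1} s⁻¹) (hv : BranchesBelow 1 v) (hvv : v' ⋖ v) :
    BranchesBelow 1 v' := by
  obtain ⟨p, q, hvp, hvq, hp1, hq1, hpq⟩ := hv
  have hv1 : v ≤ 1 := hvp.le.trans hp1
  by_contra hnot
  have huniq : ∀ r, v' ⋖ r → r ≤ 1 → r = v := fun r hr hr1 =>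
    by_contra fun hrv => hnot ⟨v, r, hvv, hr, hv1, hr1, Ne.symm hrv⟩
  have hsv := mul_inf_one_eq_of_forall_covBy hG hs hc hvv hv1 huniq
  refine hpq (mul_left_cancel (a := s⁻¹) ?_)
  rw [inv_mul_eq_inv_inf_of_covBy hs hc hsv hvv hvp hp1,
    inv_mul_eq_inv_inf_of_covBy hs hc hsv hvv hvq hq1]

theorem BranchesBelow.of_le {g : G} (hG : IsLatticeNoetherian G) (hs : IsNormal s)
    (hc : IsGLB {x | x ⋖ 1} s⁻¹) (hv : BranchesBelow 1 v) (hgv : g ≤ v) :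
    BranchesBelow 1 g := by
  have := hG.isStronglyCoatomic_s14
  obtain ⟨m, hm⟩ := (hG.wellFoundedOn_lt (S := {m | g ≤ m ∧ BranchesBelow 1 m})
    ⟨g, fun _ h => h.1⟩).exists_minimal ⟨v, hgv, hv⟩
  obtain ⟨hgm, hmb⟩ := hm.prop
  rcases hgm.eq_or_lt with rfl | hlt
  · exact hmb
  · obtain ⟨m', hgm', hm'⟩ := exists_le_covBy_of_lt hlt
    exact absurd ⟨hgm', hmb.of_covBy hG hs hc hm'⟩ (hm.not_prop_of_lt hm'.lt)

end RightLatticeGroup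

theorem meet_irreducibles_are_chains_general {G : Type*} [Lattice G] [Group G]
    [CovariantClass G G (Function.swap (· * ·)) (· ≤ ·)] [IsModularLattice G]
    (hG : IsLatticeNoetherian G) (s : G)
    (hglb : IsGLB {x : G | x ⋖ 1} s⁻¹) (hs : IsStrongOrderUnit s)
    (g : G) :
    (∀ a b : G, a ≤ 1 → b ≤ 1 → g = a ⊓ b → g = a ∨ g = b) ↔
      IsChain (· ≤ ·) (Set.Icc g (1 : G)) := by
  have := hG.isStronglyAtomic
  constructor
  · intro hirr a ha b hb _
    by_contra hcmp
    obtain ⟨hab, hba⟩ := not_or.1 hcmp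
    obtain ⟨p, q, hp, hq, hp1, hq1, hpq⟩ :=
      (branchesBelow_inf ha.2 hb.2 hab hba).of_le hG hs.2.1 hglb (le_inf ha.1 hb.1)
    rcases hirr p q hp1 hq1 (hp.inf_eq_of_ne hq hpq).symm with h | h
    exacts [hp.ne h, hq.ne h]
  · intro hchain a b ha1 hb1 hab
    have ha : a ∈ Set.Icc g 1 := ⟨hab.le.trans inf_le_left, ha1⟩
    have hb : b ∈ Set.Icc g 1 := ⟨hab.le.trans inf_le_right, hb1⟩
    rcases hchain.total ha hb with h | h
    · exact .inl (hab.trans (inf_eq_left.2 h))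
    · exact .inr (hab.trans (inf_eq_right.2 h))

/-- In a modular noetherian right ℓ-group with `s⁻¹ = ⋀ X(G⁻)` a strong order unit,
`g ≤ 1` is meet-irreducible in the negative cone iff the interval `[g, 1]` is a chain. -/
theorem meet_irreducibles_are_chains {G : Type*} [Lattice G] [Group G]
    [CovariantClass G G (Function.swap (· * ·)) (· ≤ ·)] [IsModularLattice G]
    (hG : IsLatticeNoetherian G) (s : G)
    (hglb : IsGLB {x : G | x ⋖ 1} s⁻¹) (hs : IsStrongOrderUnit s)
    (g : G) (hg : g ≤ 1) :
    (∀ a b : G, a ≤ 1 → b ≤ 1 → g = a ⊓ b → g = a ∨ g = b) ↔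
      IsChain (· ≤ ·) (Set.Icc g (1 : G)) :=
  meet_irreducibles_are_chains_general hG s hglb hs g
end

section
/- Let G be a modular noetherian right ℓ-group with strong order unit s where s^{-1} = ⋀ X(G⁻). Then s = ⋁{g ∈ G : g ≻ e}, the join of all atoms over e, and the interval [e, s] is a modular geometric lattice. -/
/-!
Right translation by `s` carries the coatoms of `1` onto the coatoms of `s`, so `1` is the meet
of the coatoms of `s`, and by the descending chain condition already the meet of finitely many of
them, `m₁, …, mₙ`. In the modular interval `[1, s]`, the number of strict descents in
`x ≥ x ⊓ m₁ ≥ x ⊓ m₁ ⊓ m₂ ≥ ⋯` is a strictly monotone rank bounded by `n`, so `[1, s]` has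
finite length. A minimal-element argument against the coatoms yields relative complements in
`[1, s]`, so every `b < a` there is avoided by some atom below `a`; the ascending chain condition
then makes every `a` a finite join of atoms. Normality of `s` puts every atom over `1` below `s`.
-/

open Set

namespace IsLatticeNoetherian

variable {α : Type*} [Lattice α]

theorem wellFoundedOn_lt_s15 (hα : IsLatticeNoetherian α) {S : Set α} (hS : BddBelow S) :
    S.WellFoundedOn (· < ·) := by
  rw [wellFoundedOn_iff_no_descending_seq]
  intro f hfS
  obtain ⟨b, hb⟩ := hS
  have hf : StrictAnti f := fun _ _ hmn => f.map_rel_iff.2 hmn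
  obtain ⟨N, hN⟩ := hα.2 f hf.antitone ⟨b, fun n => hb (hfS n)⟩
  exact (hf N.lt_succ_self).ne (hN _ N.le_succ)

theorem wellFoundedOn_gt_s15 (hα : IsLatticeNoetherian α) {S : Set α} (hS : BddAbove S) :
    S.WellFoundedOn (· > ·) := by
  rw [wellFoundedOn_iff_no_descending_seq]
  intro f hfS
  obtain ⟨b, hb⟩ := hS
  have hf : StrictMono f := fun _ _ hmn => f.map_rel_iff.2 hmn
  obtain ⟨N, hN⟩ := hα.1 f hf.monotone ⟨b, fun n => hb (hfS n)⟩
  exact (hf N.lt_succ_self).ne' (hN _ N.le_succ)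

theorem exists_covBy_le (hα : IsLatticeNoetherian α) {a b : α} (hab : a < b) :
    ∃ p, a ⋖ p ∧ p ≤ b := by
  obtain ⟨p, hp⟩ := (hα.wellFoundedOn_lt_s15 (S := {y | a < y ∧ y ≤ b})
    ⟨a, fun _ hy => hy.1.le⟩).exists_minimal ⟨b, hab, le_rfl⟩
  exact ⟨p, ⟨hp.1.1, fun z haz hzp => hp.not_prop_of_lt hzp ⟨haz, hzp.le.trans hp.1.2⟩⟩, hp.1.2⟩

end IsLatticeNoetherian

theorem CovBy.sup_eq_of_not_le {α : Type*} [SemilatticeSup α] {m s x : α} (h : m ⋖ s)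
    (hxs : x ≤ s) (hxm : ¬x ≤ m) : x ⊔ m = s :=
  (h.eq_or_eq le_sup_right (sup_le hxs h.le)).resolve_left fun e => hxm (e ▸ le_sup_left)

theorem List.le_foldr_inf {α : Type*} [SemilatticeInf α] {a s : α} {M : List α} (has : a ≤ s)
    (haM : ∀ m ∈ M, a ≤ m) : a ≤ M.foldr (· ⊓ ·) s := by
  induction M with
  | nil => exact has
  | cons m M ih =>
    exact le_inf (haM m List.mem_cons_self) (ih fun m' hm' => haM m' (List.mem_cons_of_mem _ hm'))

theorem List.IsChain.length_le_of_strictMonoOn {α : Type*} [Preorder α] {l : List α} {S : Set α}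
    {f : α → ℕ} {n : ℕ} (hl : l.IsChain (· < ·)) (hlS : ∀ x ∈ l, x ∈ S) (hf : StrictMonoOn f S)
    (hfn : ∀ x ∈ S, f x ≤ n) : l.length ≤ n + 1 := by
  have hpair : (l.map f).Pairwise (· < ·) :=
    List.pairwise_map.2 <| (List.isChain_iff_pairwise.1 hl).imp_of_mem
      fun hx hy hxy => hf (hlS _ hx) (hlS _ hy) hxy
  have hsub : l.map f ⊆ List.range (n + 1) := by
    intro k hk
    obtain ⟨x, hx, rfl⟩ := List.mem_map.1 hk
    exact List.mem_range.2 (Nat.lt_succ_of_le (hfn x (hlS x hx)))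
  simpa using (hpair.nodup.subperm hsub).length_le

section Lattice

variable {α : Type*} [Lattice α]

open Classical in
noncomputable def infDescentCount : List α → α → ℕ
  | [], _ => 0
  | m :: M, x => (if x ≤ m then 0 else 1) + infDescentCount M (x ⊓ m)

theorem infDescentCount_le_length : ∀ (M : List α) (x : α), infDescentCount M x ≤ M.length
  | [], _ => le_rfl
  | m :: M, x => by
    have := infDescentCount_le_length M (x ⊓ m)
    simp only [infDescentCount, List.length_cons]
    split_ifs <;> omega

theorem infDescentCount_mono : ∀ M : List α, Monotone (infDescentCount M)
  | [], _, _, _ => le_rfl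
  | m :: M, x, y, hxy => by
    have := infDescentCount_mono M (inf_le_inf_right m hxy)
    simp only [infDescentCount]
    split_ifs with hxm hym hym <;> try omega
    exact absurd (hxy.trans hym) hxm

theorem IsLatticeNoetherian.exists_list_covBy_foldr_inf_eq (hα : IsLatticeNoetherian α)
    {e s : α} (he : IsGLB {y | y ⋖ s} e) (hes : e ≤ s) :
    ∃ M : List α, (∀ m ∈ M, m ⋖ s) ∧ M.foldr (· ⊓ ·) s = e := by
  set T := {x | ∃ M : List α, (∀ m ∈ M, m ⋖ s) ∧ M.foldr (· ⊓ ·) s = x}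
  have heT : e ∈ lowerBounds T := by
    rintro _ ⟨M, hM, rfl⟩
    exact List.le_foldr_inf hes fun m hm => he.1 (hM m hm)
  obtain ⟨x, hx⟩ := (hα.wellFoundedOn_lt_s15 ⟨e, heT⟩).exists_minimal ⟨s, [], by simp, rfl⟩
  obtain ⟨M, hM, rfl⟩ := hx.1
  refine ⟨M, hM, le_antisymm (he.2 fun y hy => ?_) (heT hx.1)⟩
  by_contra hny
  refine hx.not_prop_of_lt (inf_lt_right.2 hny) ⟨y :: M, fun m hm => ?_, rfl⟩
  rcases List.mem_cons.1 hm with rfl | hm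
  exacts [hy, hM m hm]

end Lattice

section ModularLattice

variable {α : Type*} [Lattice α] [IsModularLattice α]

theorem eq_of_infDescentCount_le {s : α} :
    ∀ {M : List α}, (∀ m ∈ M, m ⋖ s) → ∀ {x y : α}, x ≤ y → y ≤ s →
      y ⊓ M.foldr (· ⊓ ·) s ≤ x → infDescentCount M y ≤ infDescentCount M x → x = y
  | [], _, _, _, hxy, hys, hinf, _ => le_antisymm hxy (by simpa [inf_eq_left.2 hys] using hinf)
  | m :: M, hM, x, y, hxy, hys, hinf, hcount => by
    have hm : m ⋖ s := hM m List.mem_cons_self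
    have hrest := infDescentCount_mono M (inf_le_inf_right m hxy)
    have ih : infDescentCount M (y ⊓ m) ≤ infDescentCount M (x ⊓ m) → x ⊓ m = y ⊓ m :=
      eq_of_infDescentCount_le (fun m' hm' => hM m' (List.mem_cons_of_mem _ hm'))
        (inf_le_inf_right m hxy) (inf_le_left.trans hys)
        (le_inf (by rw [inf_assoc]; exact hinf) (inf_le_left.trans inf_le_right))
    simp only [infDescentCount] at hcount
    by_cases hym : y ≤ m
    · have hxm := hxy.trans hym
      rw [if_pos hym, if_pos hxm] at hcount
      simpa [inf_eq_left.2 hym, inf_eq_left.2 hxm] using ih (by omega)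
    by_cases hxm : x ≤ m
    · rw [if_neg hym, if_pos hxm] at hcount
      omega
    rw [if_neg hym, if_neg hxm] at hcount
    refine eq_of_le_of_inf_le_of_sup_le hxy (ih (by omega)).ge ?_
    rw [hm.sup_eq_of_not_le hys hym, hm.sup_eq_of_not_le (hxy.trans hys) hxm]

theorem infDescentCount_strictMonoOn {s : α} {M : List α} (hM : ∀ m ∈ M, m ⋖ s) :
    StrictMonoOn (infDescentCount M) (Icc (M.foldr (· ⊓ ·) s) s) := fun _ hx _ hy hxy =>
  (infDescentCount_mono M hxy.le).lt_of_ne fun h =>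
    hxy.ne (eq_of_infDescentCount_le hM hxy.le hy.2 (inf_le_right.trans hx.1) h.ge)

variable {e s : α}

theorem IsLatticeNoetherian.exists_sup_eq_inf_le (hα : IsLatticeNoetherian α)
    (he : IsGLB {y | y ⋖ s} e) {a b : α} (heb : e ≤ b) (hba : b ≤ a) (has : a ≤ s) :
    ∃ c, e ≤ c ∧ c ≤ a ∧ b ⊔ c = a ∧ b ⊓ c ≤ e := by
  set S := {c | e ≤ c ∧ c ≤ a ∧ b ⊔ c = a}
  obtain ⟨c, hc⟩ := (hα.wellFoundedOn_lt_s15 (S := S) ⟨e, fun _ hc => hc.1⟩).exists_minimal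
    ⟨a, heb.trans hba, le_rfl, sup_eq_right.2 hba⟩
  obtain ⟨hec, hca, hbc⟩ := hc.1
  refine ⟨c, hec, hca, hbc, he.2 fun m hm => ?_⟩
  by_contra hbcm
  have hsplit : c = b ⊓ c ⊔ m ⊓ c := by
    rw [← sup_inf_assoc_of_le m inf_le_right,
      hm.sup_eq_of_not_le (inf_le_right.trans (hca.trans has)) hbcm, inf_eq_right.2 (hca.trans has)]
  refine hc.not_prop_of_lt (inf_lt_right.2 fun hcm => hbcm (inf_le_right.trans hcm))
    ⟨le_inf (he.1 hm) hec, inf_le_right.trans hca, ?_⟩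
  rw [← hbc]
  conv_rhs => rw [hsplit]
  rw [← sup_assoc, sup_inf_self]

theorem IsLatticeNoetherian.exists_covBy_le_not_le (hα : IsLatticeNoetherian α)
    (he : IsGLB {y | y ⋖ s} e) {a b : α} (heb : e ≤ b) (hba : b < a) (has : a ≤ s) :
    ∃ p, e ⋖ p ∧ p ≤ a ∧ ¬p ≤ b := by
  obtain ⟨c, hec, hca, hbc, hbce⟩ := hα.exists_sup_eq_inf_le he heb hba.le has
  have hec' : e < c := hec.lt_of_ne fun h => hba.ne (by rw [← hbc, ← h, sup_eq_left.2 heb])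
  obtain ⟨p, hep, hpc⟩ := hα.exists_covBy_le hec'
  exact ⟨p, hep, hpc.trans hca, fun hpb => hep.lt.not_ge ((le_inf hpb hpc).trans hbce)⟩

theorem IsLatticeNoetherian.exists_finset_covBy_isLUB (hα : IsLatticeNoetherian α)
    (he : IsGLB {y | y ⋖ s} e) {a : α} (hea : e ≤ a) (has : a ≤ s) :
    ∃ A : Finset α, (∀ x ∈ A, e ⋖ x ∧ x ≤ a) ∧ IsLUB (insert e (A : Set α)) a := by
  classical
  set W := {b | ∃ A : Finset α, (∀ x ∈ A, e ⋖ x ∧ x ≤ a) ∧ IsLUB (insert e (A : Set α)) b}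
  have haW : a ∈ upperBounds W := by
    rintro b ⟨A, hA, hAb⟩
    refine hAb.2 ?_
    rintro x (rfl | hx)
    exacts [hea, (hA x hx).2]
  obtain ⟨b, hb⟩ := (hα.wellFoundedOn_gt_s15 ⟨a, haW⟩).exists_maximal ⟨e, ∅, by simp, by simp⟩
  obtain ⟨A, hA, hAb⟩ := hb.1
  obtain rfl | hba := (haW hb.1).eq_or_lt
  · exact ⟨A, hA, hAb⟩
  obtain ⟨p, hep, hpa, hpb⟩ := hα.exists_covBy_le_not_le he (hAb.1 (mem_insert _ _)) hba has
  refine absurd ⟨insert p A, fun x hx => ?_, ?_⟩ (hb.not_prop_of_gt (right_lt_sup.2 hpb))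
  · rcases Finset.mem_insert.1 hx with rfl | hx
    exacts [⟨hep, hpa⟩, hA x hx]
  · rw [Finset.coe_insert, insert_comm]
    exact hAb.insert p

theorem length_le_of_isChain_Icc_foldr_inf {s : α} {M : List α} (hM : ∀ m ∈ M, m ⋖ s)
    {l : List α} (hl : l.IsChain (· < ·)) (hlM : ∀ x ∈ l, x ∈ Icc (M.foldr (· ⊓ ·) s) s) :
    l.length ≤ M.length + 1 :=
  hl.length_le_of_strictMonoOn hlM (infDescentCount_strictMonoOn hM)
    fun x _ => infDescentCount_le_length M x

end ModularLattice

theorem IsNormal.mul_left_mono {G : Type*} [Lattice G] [Group G] {s : G} (hs : IsNormal s) :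
    Monotone (s * ·) := fun x y h => by
  rw [← inf_eq_left, ← (hs x y).1, inf_eq_left.2 h]

section RightLatticeOrderedGroup

variable {G : Type*} [Lattice G] [Group G] [CovariantClass G G (Function.swap (· * ·)) (· ≤ ·)]

theorem IsGLB.setOf_covBy_mul_right {a b : G} (c : G) (h : IsGLB {x | x ⋖ a} b) :
    IsGLB {x | x ⋖ a * c} (b * c) := by
  have hset : {x | x ⋖ a * c} = OrderIso.mulRight c '' {x | x ⋖ a} := by
    ext x
    rw [← (OrderIso.mulRight c).apply_symm_apply x, (OrderIso.mulRight c).injective.mem_set_image]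
    exact apply_covBy_apply_iff (OrderIso.mulRight c)
  rw [hset]
  exact (OrderIso.mulRight c).isGLB_image'.2 h

theorem le_of_one_covBy {s g : G} (hglb : IsGLB {x | x ⋖ 1} s⁻¹) (hs : IsNormal s)
    (hg : 1 ⋖ g) : g ≤ s := by
  have hg' : g⁻¹ ⋖ 1 := by simpa using (apply_covBy_apply_iff (OrderIso.mulRight g⁻¹)).2 hg
  have : s⁻¹ * g ≤ 1 := by simpa using (OrderIso.mulRight g).monotone (hglb.1 hg')
  simpa using hs.mul_left_mono this

end RightLatticeOrderedGroup

/-- In a modular noetherian right ℓ-group with strong order unit `s` where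
`s⁻¹ = ⋀ X(G⁻)`, we have `s = ⋁ {g : 1 ⋖ g}`, and the interval `[1, s]` is a modular
geometric lattice: it has finite length and every element is a join of finitely many
atoms over `1`. -/
theorem join_of_atoms_is_strong_order_unit {G : Type*} [Lattice G] [Group G]
    [CovariantClass G G (Function.swap (· * ·)) (· ≤ ·)] [IsModularLattice G]
    (hG : IsLatticeNoetherian G) (s : G)
    (hglb : IsGLB {x : G | x ⋖ 1} s⁻¹) (hs : IsStrongOrderUnit s) :
    IsLUB {g : G | (1 : G) ⋖ g} s ∧
    (∃ n : ℕ, ∀ l : List G, l.Chain' (· < ·) → (∀ x ∈ l, x ∈ Set.Icc (1 : G) s) →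
      l.length ≤ n) ∧
    (∀ a : G, 1 ≤ a → a ≤ s →
      ∃ A : Finset G, (∀ x ∈ A, (1 : G) ⋖ x ∧ x ≤ s) ∧
        IsLUB (insert (1 : G) (↑A : Set G)) a) := by
  obtain ⟨h1s, hnormal, -⟩ := hs
  have he : IsGLB {y : G | y ⋖ s} 1 := by simpa using hglb.setOf_covBy_mul_right s
  refine ⟨⟨fun g hg => le_of_one_covBy hglb hnormal hg, fun u hu => ?_⟩, ?_, fun a h1a has => ?_⟩
  · obtain ⟨A, hA, hAs⟩ := hG.exists_finset_covBy_isLUB he h1s.le le_rfl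
    obtain ⟨p, hp, -⟩ := hG.exists_covBy_le h1s
    refine hAs.2 ?_
    rintro x (rfl | hx)
    exacts [hp.le.trans (hu hp), hu (hA x hx).1]
  · obtain ⟨M, hM, hMe⟩ := hG.exists_list_covBy_foldr_inf_eq he h1s.le
    exact ⟨M.length + 1, fun l hl hlM => length_le_of_isChain_Icc_foldr_inf hM hl (hMe ▸ hlM)⟩
  · obtain ⟨A, hA, hAa⟩ := hG.exists_finset_covBy_isLUB he h1a has
    exact ⟨A, fun x hx => ⟨(hA x hx).1, (hA x hx).2.trans has⟩, hAa⟩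
end
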